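/- arXiv:2110.09688 — 2 statements merged into one kernel-verified Lean document; each statement's English description precedes it below -/
import Mathlib

section
/- For every fixed r ≥ 1, there exist a polynomial p with rational coefficients of degree at most 2r − 2 and a natural number N such that for all k ≥ N, the number of Baxter matrices with r rows and k columns equals p(k). -/
/-- A Baxter matrix: a 0-1 matrix (encoded with `Bool`) such that every row and
every column contains a 1, and every clockwise and counter-clockwise pinwheel
contains an all-zero segment. -/
def IsBaxter (m n : ℕ) (M : Fin m → Fin n → Bool) : Prop :=
  (∀ i : Fin m, ∃ j : Fin n, M i j = true) ∧
  (∀ j : Fin n, ∃ i : Fin m, M i j = true) ∧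
  -- clockwise pinwheels
  (∀ i j : ℕ, ∀ hi : i + 1 < m, ∀ hj : j + 1 < n,
    (∀ j' : Fin n, (j' : ℕ) ≤ j → M ⟨i, Nat.lt_of_succ_lt hi⟩ j' = false) ∨
    (∀ i' : Fin m, (i' : ℕ) ≤ i → M i' ⟨j + 1, hj⟩ = false) ∨
    (∀ j' : Fin n, j + 1 ≤ (j' : ℕ) → M ⟨i + 1, hi⟩ j' = false) ∨
    (∀ i' : Fin m, i + 1 ≤ (i' : ℕ) → M i' ⟨j, Nat.lt_of_succ_lt hj⟩ = false)) ∧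
  -- counter-clockwise pinwheels
  (∀ i j : ℕ, ∀ hi : i + 1 < m, ∀ hj : j + 1 < n,
    (∀ j' : Fin n, (j' : ℕ) ≤ j → M ⟨i + 1, hi⟩ j' = false) ∨
    (∀ i' : Fin m, (i' : ℕ) ≤ i → M i' ⟨j, Nat.lt_of_succ_lt hj⟩ = false) ∨
    (∀ j' : Fin n, j + 1 ≤ (j' : ℕ) → M ⟨i, Nat.lt_of_succ_lt hi⟩ j' = false) ∨
    (∀ i' : Fin m, i + 1 ≤ (i' : ℕ) → M i' ⟨j + 1, hj⟩ = false))

/-- The number of entries equal to 1 in the matrix. -/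
def onesCount (m n : ℕ) (M : Fin m → Fin n → Bool) : ℕ :=
  (Finset.univ.filter (fun p : Fin m × Fin n => M p.1 p.2 = true)).card

/-- The number of Baxter matrices with `r` rows and `k` columns. -/
noncomputable def baxterCount (r k : ℕ) : ℕ :=
  Nat.card {M : Fin r → Fin k → Bool // IsBaxter r k M}

/-- The number of Baxter matrices with `r` rows and `k` columns having exactly
`t` entries equal to 1. -/
noncomputable def baxterCountOnes (r k t : ℕ) : ℕ :=
  Nat.card {M : Fin r → Fin k → Bool // IsBaxter r k M ∧ onesCount r k M = t}

namespace Bx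
open Finset

attribute [local instance] Classical.propDecidable

noncomputable section

variable {m n : ℕ}

/-- The set of column indices where row `i` has a one. -/
def rowSet (M : Fin m → Fin n → Bool) (i : Fin m) : Set ℕ :=
  {j | ∃ hj : j < n, M i ⟨j, hj⟩ = true}

/-- The set of row indices where column `j` has a one. -/
def colSet (M : Fin m → Fin n → Bool) (j : Fin n) : Set ℕ :=
  {i | ∃ hi : i < m, M ⟨i, hi⟩ j = true}

def fN (M : Fin m → Fin n → Bool) (i : Fin m) : ℕ := sInf (rowSet M i)
def lN (M : Fin m → Fin n → Bool) (i : Fin m) : ℕ := sSup (rowSet M i)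
def tN (M : Fin m → Fin n → Bool) (j : Fin n) : ℕ := sInf (colSet M j)
def bN (M : Fin m → Fin n → Bool) (j : Fin n) : ℕ := sSup (colSet M j)

lemma rowSet_bdd (M : Fin m → Fin n → Bool) (i : Fin m) : BddAbove (rowSet M i) :=
  ⟨n, fun _ h => le_of_lt h.1⟩

lemma colSet_bdd (M : Fin m → Fin n → Bool) (j : Fin n) : BddAbove (colSet M j) :=
  ⟨m, fun _ h => le_of_lt h.1⟩

lemma mem_rowSet {M : Fin m → Fin n → Bool} {i : Fin m} {j : Fin n} (h : M i j = true) :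
    (j : ℕ) ∈ rowSet M i := ⟨j.2, by simpa using h⟩

lemma mem_colSet {M : Fin m → Fin n → Bool} {i : Fin m} {j : Fin n} (h : M i j = true) :
    (i : ℕ) ∈ colSet M j := ⟨i.2, by simpa using h⟩

lemma fN_le {M : Fin m → Fin n → Bool} {i : Fin m} {j : Fin n} (h : M i j = true) :
    fN M i ≤ j := Nat.sInf_le (mem_rowSet h)

lemma le_lN {M : Fin m → Fin n → Bool} {i : Fin m} {j : Fin n} (h : M i j = true) :
    (j : ℕ) ≤ lN M i := le_csSup (rowSet_bdd M i) (mem_rowSet h)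

lemma tN_le {M : Fin m → Fin n → Bool} {i : Fin m} {j : Fin n} (h : M i j = true) :
    tN M j ≤ i := Nat.sInf_le (mem_colSet h)

lemma le_bN {M : Fin m → Fin n → Bool} {i : Fin m} {j : Fin n} (h : M i j = true) :
    (i : ℕ) ≤ bN M j := le_csSup (colSet_bdd M j) (mem_colSet h)

lemma fN_mem {M : Fin m → Fin n → Bool} {i : Fin m} (h : (rowSet M i).Nonempty) :
    fN M i ∈ rowSet M i := Nat.sInf_mem h

lemma lN_mem {M : Fin m → Fin n → Bool} {i : Fin m} (h : (rowSet M i).Nonempty) :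
    lN M i ∈ rowSet M i := Nat.sSup_mem h (rowSet_bdd M i)

lemma tN_mem {M : Fin m → Fin n → Bool} {j : Fin n} (h : (colSet M j).Nonempty) :
    tN M j ∈ colSet M j := Nat.sInf_mem h

lemma bN_mem {M : Fin m → Fin n → Bool} {j : Fin n} (h : (colSet M j).Nonempty) :
    bN M j ∈ colSet M j := Nat.sSup_mem h (colSet_bdd M j)

lemma rowSet_nonempty {M : Fin m → Fin n → Bool} (hB : IsBaxter m n M) (i : Fin m) :
    (rowSet M i).Nonempty := by
  obtain ⟨j, hj⟩ := hB.1 i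
  exact ⟨j, mem_rowSet hj⟩

lemma colSet_nonempty {M : Fin m → Fin n → Bool} (hB : IsBaxter m n M) (j : Fin n) :
    (colSet M j).Nonempty := by
  obtain ⟨i, hi⟩ := hB.2.1 j
  exact ⟨i, mem_colSet hi⟩

/-- prefix-zero characterization for a row -/
lemma pzRow_iff {M : Fin m → Fin n → Bool} {i : Fin m} (hne : (rowSet M i).Nonempty) (j : ℕ) :
    (∀ j' : Fin n, (j' : ℕ) ≤ j → M i j' = false) ↔ j < fN M i := by
  constructor
  · intro h
    by_contra hle
    push_neg at hle
    obtain ⟨hlt, hmem⟩ := fN_mem hne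
    exact absurd hmem (by simp [h ⟨fN M i, hlt⟩ hle])
  · intro h j' hj'
    by_contra htrue
    simp only [Bool.not_eq_false] at htrue
    exact absurd (fN_le htrue) (by omega)

lemma szRow_iff {M : Fin m → Fin n → Bool} {i : Fin m} (hne : (rowSet M i).Nonempty) (j : ℕ) :
    (∀ j' : Fin n, j ≤ (j' : ℕ) → M i j' = false) ↔ lN M i < j := by
  constructor
  · intro h
    by_contra hle
    push_neg at hle
    obtain ⟨hlt, hmem⟩ := lN_mem hne
    exact absurd hmem (by simp [h ⟨lN M i, hlt⟩ hle])
  · intro h j' hj'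
    by_contra htrue
    simp only [Bool.not_eq_false] at htrue
    exact absurd (le_lN htrue) (by omega)

lemma pzCol_iff {M : Fin m → Fin n → Bool} {j : Fin n} (hne : (colSet M j).Nonempty) (i : ℕ) :
    (∀ i' : Fin m, (i' : ℕ) ≤ i → M i' j = false) ↔ i < tN M j := by
  constructor
  · intro h
    by_contra hle
    push_neg at hle
    obtain ⟨hlt, hmem⟩ := tN_mem hne
    exact absurd hmem (by simp [h ⟨tN M j, hlt⟩ hle])
  · intro h i' hi'
    by_contra htrue
    simp only [Bool.not_eq_false] at htrue
    exact absurd (tN_le htrue) (by omega)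

lemma szCol_iff {M : Fin m → Fin n → Bool} {j : Fin n} (hne : (colSet M j).Nonempty) (i : ℕ) :
    (∀ i' : Fin m, i ≤ (i' : ℕ) → M i' j = false) ↔ bN M j < i := by
  constructor
  · intro h
    by_contra hle
    push_neg at hle
    obtain ⟨hlt, hmem⟩ := bN_mem hne
    exact absurd hmem (by simp [h ⟨bN M j, hlt⟩ hle])
  · intro h i' hi'
    by_contra htrue
    simp only [Bool.not_eq_false] at htrue
    exact absurd (le_bN htrue) (by omega)

end
end Bx

namespace Bx
open Finset
noncomputable section
variable {m n : ℕ}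

/-- A column with exactly one `true`. -/
def sCol (M : Fin m → Fin n → Bool) (j : Fin n) : Prop := ∃! i, M i j = true

/-- Main structural lemma: if no row ends at `j` and no row starts at `j+1`,
then columns `j` and `j+1` are equal singleton columns. -/
lemma lemA {M : Fin m → Fin n → Bool} (hB : IsBaxter m n M) {j : ℕ} (hj : j + 1 < n)
    (hend : ∀ i : Fin m, lN M i ≠ j) (hstart : ∀ i : Fin m, fN M i ≠ j + 1) :
    sCol M ⟨j, Nat.lt_of_succ_lt hj⟩ ∧
      (∀ i, M i ⟨j, Nat.lt_of_succ_lt hj⟩ = M i ⟨j + 1, hj⟩) := by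
  set J : Fin n := ⟨j, Nat.lt_of_succ_lt hj⟩ with hJ
  set J1 : Fin n := ⟨j + 1, hj⟩ with hJ1
  have hfl : ∀ i : Fin m, fN M i ≤ lN M i := by
    intro i
    obtain ⟨hlt, hmem⟩ := fN_mem (rowSet_nonempty hB i)
    exact le_lN hmem
  have hspan1 : ∀ i : Fin m, M i J = true → fN M i ≤ j ∧ j < lN M i := by
    intro i h
    have h1 : fN M i ≤ j := fN_le h
    have h2 : (j : ℕ) ≤ lN M i := le_lN h
    exact ⟨h1, lt_of_le_of_ne h2 (fun he => hend i he.symm)⟩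
  have hspan2 : ∀ i : Fin m, M i J1 = true → fN M i ≤ j ∧ j < lN M i := by
    intro i h
    have h1 : fN M i ≤ j + 1 := fN_le h
    have h2 : (j + 1 : ℕ) ≤ lN M i := le_lN h
    have h3 : fN M i ≠ j + 1 := hstart i
    exact ⟨by omega, by omega⟩
  obtain ⟨ham, hatrue⟩ := tN_mem (colSet_nonempty hB J)
  obtain ⟨hbm, hbtrue⟩ := bN_mem (colSet_nonempty hB J)
  obtain ⟨hcm, hctrue⟩ := tN_mem (colSet_nonempty hB J1)
  obtain ⟨hdm, hdtrue⟩ := bN_mem (colSet_nonempty hB J1)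
  set a := tN M J; set b := bN M J; set c := tN M J1; set d := bN M J1
  have hab : a ≤ b := le_bN hatrue
  have hcd : c ≤ d := le_bN hctrue
  -- Claim 1 : d ≤ a
  have claim1 : d ≤ a := by
    by_contra hlt
    push_neg at hlt
    have key : ∀ i : ℕ, a + 1 ≤ i → ∀ hid : i ≤ d, ∀ him : i < m, j < fN M ⟨i, him⟩ := by
      intro i hi
      induction i, hi using Nat.le_induction with
      | base =>
        intro hid him
        have hi2 : a + 1 < m := him
        rcases hB.2.2.2 a j hi2 hj with h1 | h2 | h3 | h4
        · exact (pzRow_iff (rowSet_nonempty hB ⟨a + 1, hi2⟩) j).mp h1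
        · exact absurd (h2 ⟨a, by omega⟩ (le_refl _)) (by simp [hatrue]; exact hatrue)
        · have := (szRow_iff (rowSet_nonempty hB ⟨a, by omega⟩) (j + 1)).mp h3
          have := (hspan1 ⟨a, by omega⟩ hatrue).2
          omega
        · exact absurd (h4 ⟨d, hdm⟩ (by simp only [Fin.val_mk]; omega)) (by simp [hdtrue]; exact hdtrue)
      | succ i hi ih =>
        intro hid him
        have hfi := ih (by omega) (by omega)
        have hi2 : i + 1 < m := him
        rcases hB.2.2.2 i j hi2 hj with h1 | h2 | h3 | h4
        · exact (pzRow_iff (rowSet_nonempty hB ⟨i + 1, hi2⟩) j).mp h1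
        · exact absurd (h2 ⟨a, by omega⟩ (by simp; omega)) (by simp [hatrue]; exact hatrue)
        · have := (szRow_iff (rowSet_nonempty hB ⟨i, by omega⟩) (j + 1)).mp h3
          have := hfl ⟨i, by omega⟩
          omega
        · exact absurd (h4 ⟨d, hdm⟩ (by simp; omega)) (by simp [hdtrue]; exact hdtrue)
    have h5 := key d (by omega) (le_refl _) hdm
    have h6 := (hspan2 ⟨d, hdm⟩ hdtrue).1
    omega
  -- Claim 2 : b ≤ c
  have claim2 : b ≤ c := by
    by_contra hlt
    push_neg at hlt
    have key : ∀ i : ℕ, c + 1 ≤ i → ∀ hid : i ≤ b, ∀ him : i < m, lN M ⟨i, him⟩ < j + 1 := by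
      intro i hi
      induction i, hi using Nat.le_induction with
      | base =>
        intro hid him
        have hi2 : c + 1 < m := him
        rcases hB.2.2.1 c j hi2 hj with h1 | h2 | h3 | h4
        · have := (pzRow_iff (rowSet_nonempty hB ⟨c, by omega⟩) j).mp h1
          have := (hspan2 ⟨c, by omega⟩ hctrue).1
          omega
        · exact absurd (h2 ⟨c, by omega⟩ (le_refl _)) (by simp [hctrue]; exact hctrue)
        · exact (szRow_iff (rowSet_nonempty hB ⟨c + 1, hi2⟩) (j + 1)).mp h3
        · exact absurd (h4 ⟨b, hbm⟩ (by simp only [Fin.val_mk]; omega)) (by simp [hbtrue]; exact hbtrue)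
      | succ i hi ih =>
        intro hid him
        have hli := ih (by omega) (by omega)
        have hi2 : i + 1 < m := him
        rcases hB.2.2.1 i j hi2 hj with h1 | h2 | h3 | h4
        · have := (pzRow_iff (rowSet_nonempty hB ⟨i, by omega⟩) j).mp h1
          have := hfl ⟨i, by omega⟩
          omega
        · exact absurd (h2 ⟨c, by omega⟩ (by simp; omega)) (by simp [hctrue]; exact hctrue)
        · exact (szRow_iff (rowSet_nonempty hB ⟨i + 1, hi2⟩) (j + 1)).mp h3
        · exact absurd (h4 ⟨b, hbm⟩ (by simp; omega)) (by simp [hbtrue]; exact hbtrue)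
    have h5 := key b (by omega) (le_refl _) hbm
    have h6 := (hspan1 ⟨b, hbm⟩ hbtrue).2
    omega
  have heq : a = b ∧ b = c ∧ c = d := by omega
  have h1 : ∀ i : Fin m, M i J = true ↔ (i : ℕ) = a := by
    intro i
    constructor
    · intro h
      have := tN_le h
      have := le_bN h
      omega
    · intro h
      have : i = ⟨a, ham⟩ := Fin.ext h
      rw [this]; exact hatrue
  have h2 : ∀ i : Fin m, M i J1 = true ↔ (i : ℕ) = a := by
    intro i
    constructor
    · intro h
      have := tN_le h
      have := le_bN h
      omega
    · intro h
      have : i = ⟨c, hcm⟩ := Fin.ext (by simp only [Fin.val_mk]; omega)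
      rw [this]; exact hctrue
  constructor
  · exact ⟨⟨a, ham⟩, hatrue, fun i hi => Fin.ext ((h1 i).mp hi)⟩
  · intro i
    cases hx : M i J <;> cases hy : M i J1 <;> try rfl
    · exact absurd ((h1 i).mpr ((h2 i).mp hy)) (by simp [hx])
    · exact absurd ((h2 i).mpr ((h1 i).mp hx)) (by simp [hy])
end
end Bx

namespace Bx
open Finset
attribute [local instance] Classical.propDecidable
noncomputable section
variable {m n : ℕ}

/-- Mergeable boundary: column `j` is a singleton and equals column `j+1`. -/
def mergB (M : Fin m → Fin n → Bool) (j : Fin n) : Prop :=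
  ∃ h : (j : ℕ) + 1 < n, sCol M j ∧ ∀ i, M i j = M i ⟨(j : ℕ) + 1, h⟩

/-- Number of non-singleton columns. -/
def nsC (M : Fin m → Fin n → Bool) : ℕ := (univ.filter (fun j => ¬ sCol M j)).card

/-- Number of run-ends of runs of equal singleton columns. -/
def reC (M : Fin m → Fin n → Bool) : ℕ :=
  (univ.filter (fun j => sCol M j ∧ ¬ mergB M j)).card

/-- Number of mergeable boundaries. -/
def mbC (M : Fin m → Fin n → Bool) : ℕ := (univ.filter (fun j => mergB M j)).card

lemma partition_count (M : Fin m → Fin n → Bool) : nsC M + reC M + mbC M = n := by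
  classical
  have h1 : (univ.filter (fun j => sCol M j)).card + nsC M = n := by
    rw [nsC, Finset.card_filter_add_card_filter_not]
    simp
  have h2 : (univ.filter (fun j => sCol M j ∧ mergB M j)).card
      + (univ.filter (fun j => sCol M j ∧ ¬ mergB M j)).card
      = (univ.filter (fun j => sCol M j)).card := by
    rw [← Finset.card_filter_add_card_filter_not
      (s := univ.filter (fun j : Fin n => sCol M j)) (p := fun j => mergB M j)]
    congr 1 <;> rw [Finset.filter_filter]
  have h3 : (univ.filter (fun j => sCol M j ∧ mergB M j))
      = univ.filter (fun j : Fin n => mergB M j) := by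
    apply Finset.filter_congr
    intro j _
    constructor
    · rintro ⟨-, h⟩; exact h
    · rintro ⟨hlt, hs⟩; exact ⟨hs.1, hlt, hs⟩
  rw [h3] at h2
  unfold nsC at h1
  unfold nsC reC mbC
  omega

lemma exists_event {M : Fin m → Fin n → Bool} (hB : IsBaxter m n M) {j : Fin n}
    (hj : (j : ℕ) + 1 < n) (hnm : ¬ mergB M j) :
    ∃ i, lN M i = (j : ℕ) ∨ fN M i = (j : ℕ) + 1 := by
  by_contra h
  push_neg at h
  apply hnm
  have hA := lemA hB hj (fun i => (h i).1) (fun i => (h i).2)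
  exact ⟨hj, hA.1, hA.2⟩

/-- Width bound: `nsC + reC ≤ 2m - 1`. -/
lemma width_bound {M : Fin m → Fin n → Bool} (hB : IsBaxter m n M) (hm : 1 ≤ m) :
    nsC M + reC M + 1 ≤ 2 * m := by
  classical
  have hn : 1 ≤ n := by
    obtain ⟨j, _⟩ := hB.1 ⟨0, hm⟩
    have := j.2; omega
  obtain ⟨if0, hf0⟩ : ∃ i : Fin m, fN M i = 0 := by
    obtain ⟨i, hi⟩ := hB.2.1 ⟨0, hn⟩
    have hle := fN_le hi
    simp only [Fin.val_mk] at hle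
    exact ⟨i, by omega⟩
  obtain ⟨il1, hl1⟩ : ∃ i : Fin m, lN M i = n - 1 := by
    obtain ⟨i, hi⟩ := hB.2.1 ⟨n - 1, by omega⟩
    have h1 := le_lN hi
    have h2 : lN M i < n := (lN_mem (rowSet_nonempty hB i)).1
    simp only [Fin.val_mk] at h1
    exact ⟨i, by omega⟩
  set NM : Finset (Fin n) := univ.filter (fun j => (j : ℕ) + 1 < n ∧ ¬ mergB M j) with hNM
  have hsplit : NM.card + mbC M + 1 = n := by
    have e1 : (univ.filter (fun j : Fin n => ¬ ((j : ℕ) + 1 < n))).card = 1 := by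
      have he : (univ.filter (fun j : Fin n => ¬ ((j : ℕ) + 1 < n))) = {⟨n - 1, by omega⟩} := by
        ext j
        simp only [mem_filter, mem_univ, true_and, mem_singleton]
        constructor
        · intro hj
          have := j.2
          exact Fin.ext (by simp only [Fin.val_mk]; omega)
        · intro hj; subst hj; simp only [Fin.val_mk]; omega
      rw [he, card_singleton]
    have e2 : (univ.filter (fun j : Fin n => (j : ℕ) + 1 < n)).card
        + (univ.filter (fun j : Fin n => ¬ ((j : ℕ) + 1 < n))).card = n := by
      rw [Finset.card_filter_add_card_filter_not]; simp
    have e3 : (univ.filter (fun j : Fin n => ((j : ℕ) + 1 < n) ∧ mergB M j)).card + NM.card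
        = (univ.filter (fun j : Fin n => (j : ℕ) + 1 < n)).card := by
      rw [hNM, ← Finset.card_filter_add_card_filter_not
        (s := univ.filter (fun j : Fin n => (j : ℕ) + 1 < n)) (p := fun j => mergB M j)]
      congr 1 <;> rw [Finset.filter_filter]
    have e4 : (univ.filter (fun j : Fin n => ((j : ℕ) + 1 < n) ∧ mergB M j))
        = univ.filter (fun j : Fin n => mergB M j) := by
      apply Finset.filter_congr
      intro j _
      constructor
      · rintro ⟨-, h⟩; exact h
      · rintro ⟨hlt, hs⟩; exact ⟨hlt, hlt, hs⟩
    rw [e4] at e3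
    rw [mbC]
    omega
  have hwit : ∀ j ∈ NM, (∃ i, lN M i = (j : ℕ)) ∨ (∃ i, fN M i = (j : ℕ) + 1) := by
    intro j hj
    rw [hNM, mem_filter] at hj
    obtain ⟨i, hi | hi⟩ := exists_event hB hj.2.1 hj.2.2
    · exact Or.inl ⟨i, hi⟩
    · exact Or.inr ⟨i, hi⟩
  set wit : Fin n → Fin m × Bool := fun j =>
    if h : ∃ i, lN M i = (j : ℕ) then (h.choose, false)
    else if h' : ∃ i, fN M i = (j : ℕ) + 1 then (h'.choose, true)
    else (if0, true) with hwitdef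
  set T : Finset (Fin m × Bool) := univ \ {(if0, true), (il1, false)} with hT
  have hmaps : ∀ j ∈ NM, wit j ∈ T := by
    intro j hj
    have hjlt : (j : ℕ) + 1 < n := by
      rw [hNM, mem_filter] at hj; exact hj.2.1
    rw [hT, mem_sdiff]
    refine ⟨mem_univ _, ?_⟩
    simp only [mem_insert, mem_singleton]
    push_neg
    by_cases h : ∃ i, lN M i = (j : ℕ)
    · rw [hwitdef]
      simp only [dif_pos h]
      constructor
      · simp
      · intro heq
        have h1 : h.choose = il1 := congrArg Prod.fst heq
        have h2 := h.choose_spec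
        rw [h1, hl1] at h2
        omega
    · rcases hwit j hj with h' | h'
      · exact absurd h' h
      rw [hwitdef]
      simp only [dif_neg h, dif_pos h']
      constructor
      · intro heq
        have h1 : h'.choose = if0 := congrArg Prod.fst heq
        have h2 := h'.choose_spec
        rw [h1, hf0] at h2
        omega
      · simp
  have hinjOn : Set.InjOn wit NM := by
    intro j hj j' hj' heq
    have hgt : ∀ x : Fin n, x ∈ NM → (∃ i, lN M i = (x : ℕ)) ∨ (∃ i, fN M i = (x : ℕ) + 1) := hwit
    by_cases h : ∃ i, lN M i = (j : ℕ) <;> by_cases h' : ∃ i, lN M i = (j' : ℕ)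
    · rw [hwitdef] at heq
      simp only [dif_pos h, dif_pos h'] at heq
      have h1 : h.choose = h'.choose := congrArg Prod.fst heq
      have h2 := h.choose_spec
      have h3 := h'.choose_spec
      rw [h1] at h2
      exact Fin.ext (by omega)
    · exfalso
      rcases hgt j' hj' with hx | hx
      · exact h' hx
      rw [hwitdef] at heq
      simp only [dif_pos h, dif_neg h', dif_pos hx] at heq
      exact absurd (congrArg Prod.snd heq) (by simp)
    · exfalso
      rcases hgt j hj with hx | hx
      · exact h hx
      rw [hwitdef] at heq
      simp only [dif_neg h, dif_pos h', dif_pos hx] at heq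
      exact absurd (congrArg Prod.snd heq) (by simp)
    · rcases hgt j hj with hx | hx
      · exact absurd hx h
      rcases hgt j' hj' with hx' | hx'
      · exact absurd hx' h'
      rw [hwitdef] at heq
      simp only [dif_neg h, dif_neg h', dif_pos hx, dif_pos hx'] at heq
      have h1 : hx.choose = hx'.choose := congrArg Prod.fst heq
      have h2 := hx.choose_spec
      have h3 := hx'.choose_spec
      rw [h1] at h2
      exact Fin.ext (by omega)
  have hcard := Finset.card_le_card_of_injOn wit hmaps hinjOn
  have hTcard : T.card + 2 = 2 * m := by
    rw [hT]
    rw [Finset.card_sdiff_of_subset (by intro x _; exact mem_univ x)]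
    have hpair : ({(if0, true), (il1, false)} : Finset (Fin m × Bool)).card = 2 := by
      rw [Finset.card_insert_of_notMem (by simp), card_singleton]
    rw [hpair]
    have : (univ : Finset (Fin m × Bool)).card = 2 * m := by
      simp [Fintype.card_prod]
      ring
    omega
  have hpart := partition_count M
  omega

end
end Bx

namespace Bx
open Finset
attribute [local instance] Classical.propDecidable
noncomputable section
variable {m n : ℕ}

/-- Collapse map `Fin (n+1) → Fin n` identifying `p` and `p+1`. -/
def dupF (p : Fin n) : Fin (n + 1) → Fin n := fun j =>
  if h : (j : ℕ) ≤ (p : ℕ) then ⟨j, lt_of_le_of_lt h p.2⟩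
  else ⟨(j : ℕ) - 1, by have := j.2; omega⟩

/-- The matrix with column `p` duplicated. -/
def dup (M : Fin m → Fin n → Bool) (p : Fin n) : Fin m → Fin (n + 1) → Bool :=
  fun i j => M i (dupF p j)

lemma dupF_val (p : Fin n) (j : Fin (n + 1)) :
    ((dupF p j) : ℕ) = if (j : ℕ) ≤ (p : ℕ) then (j : ℕ) else (j : ℕ) - 1 := by
  unfold dupF
  split_ifs <;> rfl

lemma dup_apply (M : Fin m → Fin n → Bool) (p : Fin n) (i : Fin m) (j : Fin (n + 1)) :
    dup M p i j = M i (dupF p j) := rfl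

/-- Transfer of prefix-all-zero conditions along `dupF`. -/
lemma pz_transfer (P : Fin n → Prop) (p : Fin n) (j : Fin (n + 1)) :
    (∀ j' : Fin (n + 1), (j' : ℕ) ≤ (j : ℕ) → P (dupF p j')) ↔
      (∀ t : Fin n, (t : ℕ) ≤ ((dupF p j) : ℕ) → P t) := by
  have hvj := dupF_val p j
  constructor
  · intro h t ht
    by_cases htp : (t : ℕ) ≤ (p : ℕ)
    · have h2 : ((t : ℕ) : ℕ) < n + 1 := by omega
      have h1 : dupF p ⟨(t : ℕ), h2⟩ = t := by
        apply Fin.ext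
        rw [dupF_val]
        simp only [Fin.val_mk, if_pos htp]
      have h3 : ((⟨(t : ℕ), h2⟩ : Fin (n + 1)) : ℕ) ≤ (j : ℕ) := by
        simp only [Fin.val_mk]
        split_ifs at hvj <;> omega
      have := h ⟨(t : ℕ), h2⟩ h3
      rwa [h1] at this
    · have h2 : (t : ℕ) + 1 < n + 1 := by have := t.2; omega
      have h1 : dupF p ⟨(t : ℕ) + 1, h2⟩ = t := by
        apply Fin.ext
        rw [dupF_val]
        simp only [Fin.val_mk, if_neg (by omega : ¬ ((t : ℕ) + 1 ≤ (p : ℕ)))]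
        omega
      have h3 : ((⟨(t : ℕ) + 1, h2⟩ : Fin (n + 1)) : ℕ) ≤ (j : ℕ) := by
        simp only [Fin.val_mk]
        split_ifs at hvj <;> omega
      have := h ⟨(t : ℕ) + 1, h2⟩ h3
      rwa [h1] at this
  · intro h j' hj'
    apply h
    rw [dupF_val p j', hvj]
    split_ifs <;> omega

/-- Transfer of suffix-all-zero conditions along `dupF`. -/
lemma sz_transfer (P : Fin n → Prop) (p : Fin n) (j : Fin (n + 1)) :
    (∀ j' : Fin (n + 1), (j : ℕ) ≤ (j' : ℕ) → P (dupF p j')) ↔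
      (∀ t : Fin n, ((dupF p j) : ℕ) ≤ (t : ℕ) → P t) := by
  have hvj := dupF_val p j
  constructor
  · intro h t ht
    by_cases htp : (t : ℕ) < (p : ℕ)
    · have h2 : ((t : ℕ) : ℕ) < n + 1 := by omega
      have h1 : dupF p ⟨(t : ℕ), h2⟩ = t := by
        apply Fin.ext
        rw [dupF_val]
        simp only [Fin.val_mk, if_pos (le_of_lt htp)]
      have h3 : (j : ℕ) ≤ ((⟨(t : ℕ), h2⟩ : Fin (n + 1)) : ℕ) := by
        simp only [Fin.val_mk]
        split_ifs at hvj <;> omega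
      have := h ⟨(t : ℕ), h2⟩ h3
      rwa [h1] at this
    · have h2 : (t : ℕ) + 1 < n + 1 := by have := t.2; omega
      have h1 : dupF p ⟨(t : ℕ) + 1, h2⟩ = t := by
        apply Fin.ext
        rw [dupF_val]
        simp only [Fin.val_mk, if_neg (by omega : ¬ ((t : ℕ) + 1 ≤ (p : ℕ)))]
        omega
      have h3 : (j : ℕ) ≤ ((⟨(t : ℕ) + 1, h2⟩ : Fin (n + 1)) : ℕ) := by
        simp only [Fin.val_mk]
        split_ifs at hvj <;> omega
      have := h ⟨(t : ℕ) + 1, h2⟩ h3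
      rwa [h1] at this
  · intro h j' hj'
    apply h
    rw [hvj, dupF_val p j']
    split_ifs <;> omega

end
end Bx

namespace Bx
open Finset
attribute [local instance] Classical.propDecidable
noncomputable section
variable {m n : ℕ}

def cwA (m n : ℕ) (M : Fin m → Fin n → Bool) (i j : ℕ) (hi : i + 1 < m) (hj : j + 1 < n) : Prop :=
  (∀ j' : Fin n, (j' : ℕ) ≤ j → M ⟨i, Nat.lt_of_succ_lt hi⟩ j' = false) ∨
  (∀ i' : Fin m, (i' : ℕ) ≤ i → M i' ⟨j + 1, hj⟩ = false) ∨
  (∀ j' : Fin n, j + 1 ≤ (j' : ℕ) → M ⟨i + 1, hi⟩ j' = false) ∨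
  (∀ i' : Fin m, i + 1 ≤ (i' : ℕ) → M i' ⟨j, Nat.lt_of_succ_lt hj⟩ = false)

def ccwA (m n : ℕ) (M : Fin m → Fin n → Bool) (i j : ℕ) (hi : i + 1 < m) (hj : j + 1 < n) : Prop :=
  (∀ j' : Fin n, (j' : ℕ) ≤ j → M ⟨i + 1, hi⟩ j' = false) ∨
  (∀ i' : Fin m, (i' : ℕ) ≤ i → M i' ⟨j, Nat.lt_of_succ_lt hj⟩ = false) ∨
  (∀ j' : Fin n, j + 1 ≤ (j' : ℕ) → M ⟨i, Nat.lt_of_succ_lt hi⟩ j' = false) ∨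
  (∀ i' : Fin m, i + 1 ≤ (i' : ℕ) → M i' ⟨j + 1, hj⟩ = false)

lemma isBaxter_iff' (M : Fin m → Fin n → Bool) :
    IsBaxter m n M ↔ (∀ i, ∃ j, M i j = true) ∧ (∀ j, ∃ i, M i j = true) ∧
      (∀ i j : ℕ, ∀ hi : i + 1 < m, ∀ hj : j + 1 < n, cwA m n M i j hi hj) ∧
      (∀ i j : ℕ, ∀ hi : i + 1 < m, ∀ hj : j + 1 < n, ccwA m n M i j hi hj) := Iff.rfl

lemma cwA_dup_iff (M : Fin m → Fin n → Bool) (p : Fin n) (i j t : ℕ)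
    (hi : i + 1 < m) (hj : j + 1 < n + 1) (ht : t + 1 < n)
    (h0 : ((dupF p ⟨j, Nat.lt_of_succ_lt hj⟩) : ℕ) = t)
    (h1 : ((dupF p ⟨j + 1, hj⟩) : ℕ) = t + 1) :
    cwA m (n + 1) (dup M p) i j hi hj ↔ cwA m n M i t hi ht := by
  have hidx1 : dupF p ⟨j + 1, hj⟩ = ⟨t + 1, ht⟩ := Fin.ext h1
  have hidx0 : dupF p ⟨j, Nat.lt_of_succ_lt hj⟩ = ⟨t, Nat.lt_of_succ_lt ht⟩ := Fin.ext h0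
  unfold cwA
  apply or_congr
  · exact Iff.trans
      (pz_transfer (fun t' => M ⟨i, Nat.lt_of_succ_lt hi⟩ t' = false) p ⟨j, Nat.lt_of_succ_lt hj⟩)
      (by rw [h0])
  apply or_congr
  · simp only [dup_apply, hidx1]
  apply or_congr
  · exact Iff.trans
      (sz_transfer (fun t' => M ⟨i + 1, hi⟩ t' = false) p ⟨j + 1, hj⟩)
      (by rw [h1])
  · simp only [dup_apply, hidx0]

lemma ccwA_dup_iff (M : Fin m → Fin n → Bool) (p : Fin n) (i j t : ℕ)
    (hi : i + 1 < m) (hj : j + 1 < n + 1) (ht : t + 1 < n)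
    (h0 : ((dupF p ⟨j, Nat.lt_of_succ_lt hj⟩) : ℕ) = t)
    (h1 : ((dupF p ⟨j + 1, hj⟩) : ℕ) = t + 1) :
    ccwA m (n + 1) (dup M p) i j hi hj ↔ ccwA m n M i t hi ht := by
  have hidx1 : dupF p ⟨j + 1, hj⟩ = ⟨t + 1, ht⟩ := Fin.ext h1
  have hidx0 : dupF p ⟨j, Nat.lt_of_succ_lt hj⟩ = ⟨t, Nat.lt_of_succ_lt ht⟩ := Fin.ext h0
  unfold ccwA
  apply or_congr
  · exact Iff.trans
      (pz_transfer (fun t' => M ⟨i + 1, hi⟩ t' = false) p ⟨j, Nat.lt_of_succ_lt hj⟩)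
      (by rw [h0])
  apply or_congr
  · simp only [dup_apply, hidx0]
  apply or_congr
  · exact Iff.trans
      (sz_transfer (fun t' => M ⟨i, Nat.lt_of_succ_lt hi⟩ t' = false) p ⟨j + 1, hj⟩)
      (by rw [h1])
  · simp only [dup_apply, hidx1]

lemma isBaxter_dup_iff {M : Fin m → Fin n → Bool} {p : Fin n} (hp : sCol M p) :
    IsBaxter m (n + 1) (dup M p) ↔ IsBaxter m n M := by
  obtain ⟨e, he, hu⟩ := hp
  have hcolp : ∀ i' : Fin m, i' ≠ e → M i' p = false := by
    intro i' hne
    by_contra h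
    simp only [Bool.not_eq_false] at h
    exact hne (hu i' h)
  constructor
  · -- dup Baxter → M Baxter
    intro hB
    rw [isBaxter_iff'] at hB ⊢
    obtain ⟨hrow, hcol, hcw, hccw⟩ := hB
    refine ⟨?_, ?_, ?_, ?_⟩
    · intro i
      obtain ⟨j, hj⟩ := hrow i
      exact ⟨dupF p j, hj⟩
    · intro t
      by_cases htp : (t : ℕ) ≤ (p : ℕ)
      · obtain ⟨i, hi⟩ := hcol ⟨(t : ℕ), by omega⟩
        refine ⟨i, ?_⟩
        rw [dup_apply] at hi
        convert hi using 2
        apply Fin.ext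
        rw [dupF_val]
        simp only [Fin.val_mk, if_pos htp]
      · obtain ⟨i, hi⟩ := hcol ⟨(t : ℕ) + 1, by have := t.2; omega⟩
        refine ⟨i, ?_⟩
        rw [dup_apply] at hi
        convert hi using 2
        apply Fin.ext
        rw [dupF_val]
        simp only [Fin.val_mk, if_neg (by omega : ¬ ((t : ℕ) + 1 ≤ (p : ℕ)))]
        omega
    · intro i t hi ht
      by_cases htp : t < (p : ℕ)
      · have hj : t + 1 < n + 1 := by omega
        have h0 : ((dupF p ⟨t, Nat.lt_of_succ_lt hj⟩) : ℕ) = t := by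
          rw [dupF_val]; simp only [Fin.val_mk]; split_ifs <;> omega
        have h1 : ((dupF p ⟨t + 1, hj⟩) : ℕ) = t + 1 := by
          rw [dupF_val]; simp only [Fin.val_mk]; split_ifs <;> omega
        exact (cwA_dup_iff M p i t t hi hj ht h0 h1).mp (hcw i t hi hj)
      · have hj : (t + 1) + 1 < n + 1 := by omega
        have h0 : ((dupF p ⟨t + 1, Nat.lt_of_succ_lt hj⟩) : ℕ) = t := by
          rw [dupF_val]; simp only [Fin.val_mk]; split_ifs <;> omega
        have h1 : ((dupF p ⟨(t + 1) + 1, hj⟩) : ℕ) = t + 1 := by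
          rw [dupF_val]; simp only [Fin.val_mk]; split_ifs <;> omega
        exact (cwA_dup_iff M p i (t + 1) t hi hj ht h0 h1).mp (hcw i (t + 1) hi hj)
    · intro i t hi ht
      by_cases htp : t < (p : ℕ)
      · have hj : t + 1 < n + 1 := by omega
        have h0 : ((dupF p ⟨t, Nat.lt_of_succ_lt hj⟩) : ℕ) = t := by
          rw [dupF_val]; simp only [Fin.val_mk]; split_ifs <;> omega
        have h1 : ((dupF p ⟨t + 1, hj⟩) : ℕ) = t + 1 := by
          rw [dupF_val]; simp only [Fin.val_mk]; split_ifs <;> omega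
        exact (ccwA_dup_iff M p i t t hi hj ht h0 h1).mp (hccw i t hi hj)
      · have hj : (t + 1) + 1 < n + 1 := by omega
        have h0 : ((dupF p ⟨t + 1, Nat.lt_of_succ_lt hj⟩) : ℕ) = t := by
          rw [dupF_val]; simp only [Fin.val_mk]; split_ifs <;> omega
        have h1 : ((dupF p ⟨(t + 1) + 1, hj⟩) : ℕ) = t + 1 := by
          rw [dupF_val]; simp only [Fin.val_mk]; split_ifs <;> omega
        exact (ccwA_dup_iff M p i (t + 1) t hi hj ht h0 h1).mp (hccw i (t + 1) hi hj)
  · -- M Baxter → dup Baxter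
    intro hB
    rw [isBaxter_iff'] at hB ⊢
    obtain ⟨hrow, hcol, hcw, hccw⟩ := hB
    refine ⟨?_, ?_, ?_, ?_⟩
    · intro i
      obtain ⟨t, ht⟩ := hrow i
      by_cases htp : (t : ℕ) ≤ (p : ℕ)
      · refine ⟨⟨(t : ℕ), by omega⟩, ?_⟩
        rw [dup_apply]
        convert ht using 2
        apply Fin.ext
        rw [dupF_val]
        simp only [Fin.val_mk, if_pos htp]
      · refine ⟨⟨(t : ℕ) + 1, by have := t.2; omega⟩, ?_⟩
        rw [dup_apply]
        convert ht using 2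
        apply Fin.ext
        rw [dupF_val]
        simp only [Fin.val_mk, if_neg (by omega : ¬ ((t : ℕ) + 1 ≤ (p : ℕ)))]
        omega
    · intro j
      obtain ⟨i, hi⟩ := hcol (dupF p j)
      exact ⟨i, hi⟩
    · intro i j hi hj
      by_cases hcase : j = (p : ℕ)
      · unfold cwA
        by_cases hei : (e : ℕ) ≤ i
        · refine Or.inr (Or.inr (Or.inr ?_))
          intro i' hi'
          rw [dup_apply]
          have hidx : dupF p ⟨j, Nat.lt_of_succ_lt hj⟩ = p := by
            apply Fin.ext
            rw [dupF_val]
            simp only [Fin.val_mk]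
            split_ifs <;> omega
          rw [hidx]
          apply hcolp
          intro hcon
          rw [hcon] at hi'
          omega
        · refine Or.inr (Or.inl ?_)
          intro i' hi'
          rw [dup_apply]
          have hidx : dupF p ⟨j + 1, hj⟩ = p := by
            apply Fin.ext
            rw [dupF_val]
            simp only [Fin.val_mk]
            split_ifs <;> omega
          rw [hidx]
          apply hcolp
          intro hcon
          rw [hcon] at hi'
          omega
      · have hv0 := dupF_val p ⟨j, Nat.lt_of_succ_lt hj⟩
        have hv1 := dupF_val p ⟨j + 1, hj⟩
        simp only [Fin.val_mk] at hv0 hv1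
        have h2 := (dupF p ⟨j + 1, hj⟩).2
        have h0 := (dupF p ⟨j, Nat.lt_of_succ_lt hj⟩).2
        have h1 : ((dupF p ⟨j + 1, hj⟩) : ℕ) = ((dupF p ⟨j, Nat.lt_of_succ_lt hj⟩) : ℕ) + 1 := by
          split_ifs at hv0 hv1 <;> omega
        have ht : ((dupF p ⟨j, Nat.lt_of_succ_lt hj⟩) : ℕ) + 1 < n := by omega
        exact (cwA_dup_iff M p i j _ hi hj ht rfl h1).mpr
          (hcw i ((dupF p ⟨j, Nat.lt_of_succ_lt hj⟩) : ℕ) hi ht)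
    · intro i j hi hj
      by_cases hcase : j = (p : ℕ)
      · unfold ccwA
        by_cases hei : (e : ℕ) ≤ i
        · refine Or.inr (Or.inr (Or.inr ?_))
          intro i' hi'
          rw [dup_apply]
          have hidx : dupF p ⟨j + 1, hj⟩ = p := by
            apply Fin.ext
            rw [dupF_val]
            simp only [Fin.val_mk]
            split_ifs <;> omega
          rw [hidx]
          apply hcolp
          intro hcon
          rw [hcon] at hi'
          omega
        · refine Or.inr (Or.inl ?_)
          intro i' hi'
          rw [dup_apply]
          have hidx : dupF p ⟨j, Nat.lt_of_succ_lt hj⟩ = p := by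
            apply Fin.ext
            rw [dupF_val]
            simp only [Fin.val_mk]
            split_ifs <;> omega
          rw [hidx]
          apply hcolp
          intro hcon
          rw [hcon] at hi'
          omega
      · have hv0 := dupF_val p ⟨j, Nat.lt_of_succ_lt hj⟩
        have hv1 := dupF_val p ⟨j + 1, hj⟩
        simp only [Fin.val_mk] at hv0 hv1
        have h2 := (dupF p ⟨j + 1, hj⟩).2
        have h0 := (dupF p ⟨j, Nat.lt_of_succ_lt hj⟩).2
        have h1 : ((dupF p ⟨j + 1, hj⟩) : ℕ) = ((dupF p ⟨j, Nat.lt_of_succ_lt hj⟩) : ℕ) + 1 := by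
          split_ifs at hv0 hv1 <;> omega
        have ht : ((dupF p ⟨j, Nat.lt_of_succ_lt hj⟩) : ℕ) + 1 < n := by omega
        exact (ccwA_dup_iff M p i j _ hi hj ht rfl h1).mpr
          (hccw i ((dupF p ⟨j, Nat.lt_of_succ_lt hj⟩) : ℕ) hi ht)
end
end Bx

namespace Bx
open Finset
attribute [local instance] Classical.propDecidable
noncomputable section
variable {m n : ℕ}

/-- Section of `dupF p` sending `p` to `p` (left section). -/
def secL (p : Fin n) (t : Fin n) : Fin (n + 1) :=
  if (t : ℕ) ≤ (p : ℕ) then ⟨t, by have := t.2; omega⟩ else ⟨(t : ℕ) + 1, by have := t.2; omega⟩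

lemma secL_val (p t : Fin n) :
    ((secL p t) : ℕ) = if (t : ℕ) ≤ (p : ℕ) then (t : ℕ) else (t : ℕ) + 1 := by
  unfold secL; split_ifs <;> rfl

lemma dupF_secL (p t : Fin n) : dupF p (secL p t) = t := by
  apply Fin.ext
  rw [dupF_val, secL_val]
  split_ifs <;> omega

lemma sCol_dup_iff (M : Fin m → Fin n → Bool) (p : Fin n) (j : Fin (n + 1)) :
    sCol (dup M p) j ↔ sCol M (dupF p j) := Iff.rfl

lemma dupF_eq_p {p : Fin n} {j j' : Fin (n + 1)}
    (hne : j ≠ j') (heq : dupF p j = dupF p j') : dupF p j = p := by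
  have h1 := dupF_val p j
  have h2 := dupF_val p j'
  have hv : ((dupF p j) : ℕ) = ((dupF p j') : ℕ) := by rw [heq]
  have hne' : (j : ℕ) ≠ (j' : ℕ) := fun h => hne (Fin.ext h)
  apply Fin.ext
  split_ifs at h1 h2 <;> omega

lemma nsC_dup {M : Fin m → Fin n → Bool} {p : Fin n} (hp : sCol M p) :
    nsC (dup M p) = nsC M := by
  classical
  unfold nsC
  apply Finset.card_bij (fun j _ => dupF p j)
  · intro j hj
    simp only [mem_filter, mem_univ, true_and] at hj ⊢
    exact hj
  · intro j hj j' hj' heq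
    by_contra hne
    simp only [mem_filter, mem_univ, true_and] at hj
    exact hj (by rw [sCol_dup_iff, dupF_eq_p hne heq]; exact hp)
  · intro t ht
    simp only [mem_filter, mem_univ, true_and] at ht
    refine ⟨secL p t, ?_, ?_⟩
    · simp only [mem_filter, mem_univ, true_and]
      rw [sCol_dup_iff, dupF_secL]
      exact ht
    · rw [dupF_secL]

/-- `mergB` holds at the duplicated position. -/
lemma mergB_dup_self {M : Fin m → Fin n → Bool} {p : Fin n} (hp : sCol M p) :
    mergB (dup M p) ⟨(p : ℕ), by omega⟩ := by
  have hlt : ((⟨(p : ℕ), by omega⟩ : Fin (n + 1)) : ℕ) + 1 < n + 1 := by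
    simp only [Fin.val_mk]; have := p.2; omega
  refine ⟨hlt, ?_, ?_⟩
  · rw [sCol_dup_iff]
    have : dupF p ⟨(p : ℕ), by omega⟩ = p := by
      apply Fin.ext; rw [dupF_val]; simp only [Fin.val_mk, if_pos (le_refl _)]
    rw [this]; exact hp
  · intro i
    rw [dup_apply, dup_apply]
    congr 1
    apply Fin.ext
    rw [dupF_val, dupF_val]
    simp only [Fin.val_mk]
    split_ifs <;> omega

lemma mergB_of_mergB_base {M : Fin m → Fin n → Bool} {p : Fin n} (hp : sCol M p)
    {j : Fin (n + 1)} (hm : mergB M (dupF p j)) : mergB (dup M p) j := by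
  obtain ⟨ht, hs, hcoleq⟩ := hm
  have hj1 : (j : ℕ) + 1 < n + 1 := by
    have hv := dupF_val p j
    split_ifs at hv <;> omega
  refine ⟨hj1, ?_, ?_⟩
  · rw [sCol_dup_iff]; exact hs
  · intro i
    rw [dup_apply, dup_apply]
    have hv := dupF_val p j
    have hv1 := dupF_val p ⟨(j : ℕ) + 1, hj1⟩
    simp only [Fin.val_mk] at hv1
    by_cases hcase : ((dupF p ⟨(j : ℕ) + 1, hj1⟩) : ℕ) = ((dupF p j) : ℕ)
    · rw [show dupF p ⟨(j : ℕ) + 1, hj1⟩ = dupF p j from Fin.ext hcase]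
    · have hstep : ((dupF p ⟨(j : ℕ) + 1, hj1⟩) : ℕ) = ((dupF p j) : ℕ) + 1 := by
        split_ifs at hv hv1 <;> omega
      have : dupF p ⟨(j : ℕ) + 1, hj1⟩ = ⟨((dupF p j) : ℕ) + 1, ht⟩ := Fin.ext hstep
      rw [this]
      exact hcoleq i

lemma mergB_base_of_mergB {M : Fin m → Fin n → Bool} {p : Fin n} (hp : sCol M p)
    {t : Fin n} (hne : ¬ mergB M t)
    {j : Fin (n + 1)} (hjt : dupF p j = t) (hj : (j : ℕ) ≠ (p : ℕ)) :
    ¬ mergB (dup M p) j := by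
  rintro ⟨hj1, hs, hcoleq⟩
  apply hne
  have hv := dupF_val p j
  have hv1 := dupF_val p ⟨(j : ℕ) + 1, hj1⟩
  simp only [Fin.val_mk] at hv1
  have hstep : ((dupF p ⟨(j : ℕ) + 1, hj1⟩) : ℕ) = ((dupF p j) : ℕ) + 1 := by
    split_ifs at hv hv1 <;> omega
  have htlt : (t : ℕ) + 1 < n := by
    have := (dupF p ⟨(j : ℕ) + 1, hj1⟩).2
    rw [hstep, hjt] at this
    exact this
  refine ⟨htlt, by rw [← hjt]; exact hs, ?_⟩
  intro i
  have := hcoleq i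
  rw [dup_apply, dup_apply] at this
  rw [hjt] at hstep
  rw [show dupF p ⟨(j : ℕ) + 1, hj1⟩ = ⟨(t : ℕ) + 1, htlt⟩ from Fin.ext hstep, hjt] at this
  exact this

lemma reC_dup {M : Fin m → Fin n → Bool} {p : Fin n} (hp : sCol M p) :
    reC (dup M p) = reC M := by
  classical
  unfold reC
  apply Finset.card_bij (fun j _ => dupF p j)
  · intro j hj
    simp only [mem_filter, mem_univ, true_and] at hj ⊢
    refine ⟨hj.1, ?_⟩
    intro hm
    exact hj.2 (mergB_of_mergB_base hp hm)
  · intro j hj j' hj' heq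
    by_contra hne
    have hpp := dupF_eq_p hne heq
    -- then j or j' has value p, and mergB (dup M p) at value p holds, contradiction
    have hj2 := hj
    have hj'2 := hj'
    simp only [mem_filter, mem_univ, true_and] at hj2 hj'2
    have hv := dupF_val p j
    have hv' := dupF_val p j'
    have hvv : ((dupF p j) : ℕ) = (p : ℕ) := by rw [hpp]
    have hvv' : ((dupF p j') : ℕ) = (p : ℕ) := by rw [heq] at hvv; omega
    have hcases : (j : ℕ) = (p : ℕ) ∨ (j' : ℕ) = (p : ℕ) := by
      have hne' : (j : ℕ) ≠ (j' : ℕ) := fun h => hne (Fin.ext h)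
      split_ifs at hv hv' <;> omega
    rcases hcases with hc | hc
    · exact hj2.2 (by rw [show j = ⟨(p : ℕ), by omega⟩ from Fin.ext hc]; exact mergB_dup_self hp)
    · exact hj'2.2 (by rw [show j' = ⟨(p : ℕ), by omega⟩ from Fin.ext hc]; exact mergB_dup_self hp)
  · intro t ht
    simp only [mem_filter, mem_univ, true_and] at ht
    -- section avoiding p: send t = p to p+1
    by_cases htp : (t : ℕ) < (p : ℕ)
    · refine ⟨⟨(t : ℕ), by have := t.2; omega⟩, ?_, ?_⟩
      · have hjt : dupF p ⟨(t : ℕ), by have := t.2; omega⟩ = t := by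
          apply Fin.ext; rw [dupF_val]; simp only [Fin.val_mk]; split_ifs <;> omega
        simp only [mem_filter, mem_univ, true_and]
        constructor
        · rw [sCol_dup_iff, hjt]; exact ht.1
        · exact mergB_base_of_mergB hp ht.2 hjt (by simp only [Fin.val_mk]; omega)
      · apply Fin.ext; rw [dupF_val]; simp only [Fin.val_mk]; split_ifs <;> omega
    · refine ⟨⟨(t : ℕ) + 1, by have := t.2; omega⟩, ?_, ?_⟩
      · have hjt : dupF p ⟨(t : ℕ) + 1, by have := t.2; omega⟩ = t := by
          apply Fin.ext; rw [dupF_val]; simp only [Fin.val_mk]; split_ifs <;> omega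
        simp only [mem_filter, mem_univ, true_and]
        constructor
        · rw [sCol_dup_iff, hjt]; exact ht.1
        · exact mergB_base_of_mergB hp ht.2 hjt (by simp only [Fin.val_mk]; omega)
      · apply Fin.ext; rw [dupF_val]; simp only [Fin.val_mk]; split_ifs <;> omega

end
end Bx

namespace Bx
open Finset
attribute [local instance] Classical.propDecidable
noncomputable section
variable {m n : ℕ}

/-- Merge map: contract columns `p` and `p+1`. -/
def mrg (M' : Fin m → Fin (n + 1) → Bool) (p : Fin n) : Fin m → Fin n → Bool :=
  fun i t => M' i (secL p t)

lemma mrg_dup (M : Fin m → Fin n → Bool) (p : Fin n) : mrg (dup M p) p = M := by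
  funext i t
  unfold mrg
  rw [dup_apply, dupF_secL]

lemma dup_mrg {M' : Fin m → Fin (n + 1) → Bool} {p : Fin n}
    (hcoleq : ∀ i, M' i ⟨(p : ℕ), by have := p.2; omega⟩
      = M' i ⟨(p : ℕ) + 1, by have := p.2; omega⟩) :
    dup (mrg M' p) p = M' := by
  funext i x
  rw [dup_apply]
  unfold mrg
  by_cases hx : (x : ℕ) = (p : ℕ) + 1
  · have h1 : dupF p x = p := Fin.ext (by rw [dupF_val]; split_ifs <;> omega)
    have h2 : secL p p = ⟨(p : ℕ), by have := p.2; omega⟩ :=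
      Fin.ext (by rw [secL_val]; simp)
    rw [h1, h2, hcoleq i]
    congr 1
    exact Fin.ext (by simp only [Fin.val_mk]; omega)
  · have h3 : secL p (dupF p x) = x := by
      apply Fin.ext
      rw [secL_val, dupF_val]
      have := x.2
      split_ifs <;> omega
    rw [h3]

lemma card_sCol (M : Fin m → Fin n → Bool) :
    (univ.filter (fun j => sCol M j)).card + nsC M = n := by
  classical
  rw [nsC, Finset.card_filter_add_card_filter_not]
  simp

/-- The refined count of Baxter matrices by type `(q, s)`. -/
def u (r q s K : ℕ) : ℕ :=
  Nat.card {M : Fin r → Fin K → Bool // IsBaxter r K M ∧ nsC M = q ∧ reC M = s}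

/-- The fundamental counting identity. -/
lemma step_eq (r q s K : ℕ) :
    u r q s K * (K - q) = u r q s (K + 1) * (K + 1 - q - s) := by
  classical
  -- pair types
  let P : (Fin r → Fin K → Bool) → Prop := fun M => IsBaxter r K M ∧ nsC M = q ∧ reC M = s
  let P' : (Fin r → Fin (K + 1) → Bool) → Prop :=
    fun M => IsBaxter r (K + 1) M ∧ nsC M = q ∧ reC M = s
  -- sigma types
  have e1 : {Mp : (Fin r → Fin K → Bool) × Fin K // P Mp.1 ∧ sCol Mp.1 Mp.2}
      ≃ Σ Ms : {M : Fin r → Fin K → Bool // P M}, {p : Fin K // sCol Ms.1 p} :=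
    { toFun := fun x => ⟨⟨x.1.1, x.2.1⟩, ⟨x.1.2, x.2.2⟩⟩
      invFun := fun x => ⟨(x.1.1, x.2.1), x.1.2, x.2.2⟩
      left_inv := fun x => rfl
      right_inv := fun x => rfl }
  have e2 : {Mj : (Fin r → Fin (K + 1) → Bool) × Fin (K + 1) // P' Mj.1 ∧ mergB Mj.1 Mj.2}
      ≃ Σ Ms : {M : Fin r → Fin (K + 1) → Bool // P' M}, {j : Fin (K + 1) // mergB Ms.1 j} :=
    { toFun := fun x => ⟨⟨x.1.1, x.2.1⟩, ⟨x.1.2, x.2.2⟩⟩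
      invFun := fun x => ⟨(x.1.1, x.2.1), x.1.2, x.2.2⟩
      left_inv := fun x => rfl
      right_inv := fun x => rfl }
  -- the duplication equivalence between the two pair types
  have e0 : {Mp : (Fin r → Fin K → Bool) × Fin K // P Mp.1 ∧ sCol Mp.1 Mp.2}
      ≃ {Mj : (Fin r → Fin (K + 1) → Bool) × Fin (K + 1) // P' Mj.1 ∧ mergB Mj.1 Mj.2} := by
    refine
      { toFun := fun x => ⟨(dup x.1.1 x.1.2, ⟨(x.1.2 : ℕ), by have := x.1.2.2; omega⟩), ?_, ?_⟩
        invFun := fun x => ⟨(mrg x.1.1 ⟨(x.1.2 : ℕ), ?_⟩, ⟨(x.1.2 : ℕ), ?_⟩), ?_⟩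
        left_inv := ?_
        right_inv := ?_ }
    · obtain ⟨⟨hB, hq, hs⟩, hsc⟩ := x.2
      exact ⟨(isBaxter_dup_iff hsc).mpr hB, by rw [nsC_dup hsc]; exact hq,
        by rw [reC_dup hsc]; exact hs⟩
    · exact mergB_dup_self x.2.2
    · -- (x.1.2 : ℕ) < K   from mergB
      obtain ⟨hlt, -, -⟩ := x.2.2
      omega
    · obtain ⟨hlt, -, -⟩ := x.2.2
      omega
    · -- properties of the merged matrix
      obtain ⟨⟨hB, hq, hs⟩, hmb⟩ := x.2
      obtain ⟨hlt, hsc, hcoleq⟩ := hmb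
      set pp : Fin K := ⟨(x.1.2 : ℕ), by omega⟩ with hpp
      have hcol' : ∀ i, x.1.1 i ⟨(pp : ℕ), by have := pp.2; omega⟩
          = x.1.1 i ⟨(pp : ℕ) + 1, by have := pp.2; omega⟩ := by
        intro i
        have := hcoleq i
        convert this using 3
      have hdm : dup (mrg x.1.1 pp) pp = x.1.1 := dup_mrg hcol'
      have hscol : sCol (mrg x.1.1 pp) pp := by
        obtain ⟨e, he, hu⟩ := hsc
        refine ⟨e, ?_, ?_⟩
        · unfold mrg
          have h2 : secL pp pp = ⟨(pp : ℕ), by have := pp.2; omega⟩ :=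
            Fin.ext (by rw [secL_val]; simp)
          rw [h2]
          convert he using 2
        · intro i hi
          apply hu
          unfold mrg at hi
          have h2 : secL pp pp = ⟨(pp : ℕ), by have := pp.2; omega⟩ :=
            Fin.ext (by rw [secL_val]; simp)
          rw [h2] at hi
          convert hi using 2
      refine ⟨⟨?_, ?_, ?_⟩, hscol⟩
      · have := (isBaxter_dup_iff hscol).mp (by rw [hdm]; exact hB)
        exact this
      · have h := nsC_dup hscol
        rw [hdm] at h
        show nsC (mrg x.1.1 pp) = q
        omega
      · have h := reC_dup hscol
        rw [hdm] at h
        show reC (mrg x.1.1 pp) = s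
        omega
    · -- left inverse
      intro x
      apply Subtype.ext
      apply Prod.ext
      · simp only []
        exact mrg_dup x.1.1 x.1.2
      · exact Fin.ext rfl
    · -- right inverse
      intro x
      apply Subtype.ext
      apply Prod.ext
      · simp only []
        apply dup_mrg
        intro i
        have hcoleq := x.2.2.2.2
        have := hcoleq i
        convert this using 3
      · exact Fin.ext rfl
  -- cardinalities
  letI : Fintype {M : Fin r → Fin K → Bool // P M} := Fintype.ofFinite _
  letI : Fintype {M : Fin r → Fin (K + 1) → Bool // P' M} := Fintype.ofFinite _
  have cardL : Nat.card {Mp : (Fin r → Fin K → Bool) × Fin K // P Mp.1 ∧ sCol Mp.1 Mp.2}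
      = u r q s K * (K - q) := by
    rw [Nat.card_congr e1, Nat.card_eq_fintype_card, Fintype.card_sigma]
    have hterm : ∀ Ms : {M : Fin r → Fin K → Bool // P M},
        Fintype.card {p : Fin K // sCol Ms.1 p} = K - q := by
      intro Ms
      rw [Fintype.card_subtype]
      have h := card_sCol Ms.1
      have hq := Ms.2.2.1
      omega
    rw [Finset.sum_congr rfl (fun Ms _ => hterm Ms), Finset.sum_const, smul_eq_mul]
    have hu : u r q s K = Fintype.card {M : Fin r → Fin K → Bool // P M} :=
      Nat.card_eq_fintype_card
    rw [Finset.card_univ, hu]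
  have cardR : Nat.card
        {Mj : (Fin r → Fin (K + 1) → Bool) × Fin (K + 1) // P' Mj.1 ∧ mergB Mj.1 Mj.2}
      = u r q s (K + 1) * (K + 1 - q - s) := by
    rw [Nat.card_congr e2, Nat.card_eq_fintype_card, Fintype.card_sigma]
    have hterm : ∀ Ms : {M : Fin r → Fin (K + 1) → Bool // P' M},
        Fintype.card {j : Fin (K + 1) // mergB Ms.1 j} = K + 1 - q - s := by
      intro Ms
      rw [Fintype.card_subtype]
      have h := partition_count Ms.1
      have hq := Ms.2.2.1
      have hs := Ms.2.2.2
      have : (univ.filter (fun j => mergB Ms.1 j)).card = mbC Ms.1 := rfl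
      rw [this]
      unfold nsC at hq
      unfold reC at hs
      unfold mbC
      omega
    rw [Finset.sum_congr rfl (fun Ms _ => hterm Ms), Finset.sum_const, smul_eq_mul]
    have hu : u r q s (K + 1) = Fintype.card {M : Fin r → Fin (K + 1) → Bool // P' M} :=
      Nat.card_eq_fintype_card
    rw [Finset.card_univ, hu]
  rw [← cardL, ← cardR]
  exact Nat.card_congr e0

end
end Bx

namespace Bx
open Finset
attribute [local instance] Classical.propDecidable
noncomputable section
variable {m n : ℕ}

lemma reC_pos {M : Fin m → Fin n → Bool} (hB : IsBaxter m n M) (hm : 1 ≤ m)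
    (hn : 2 * m ≤ n) : 1 ≤ reC M := by
  classical
  have hwb := width_bound hB hm
  have hsne : (univ.filter (fun j => sCol M j)).Nonempty := by
    rw [← Finset.card_pos]
    have := card_sCol M
    have : nsC M < n := by
      unfold nsC reC at *
      omega
    have h2 := card_sCol M
    omega
  by_contra h0
  push_neg at h0
  have hre : reC M = 0 := by omega
  have hempty : (univ.filter (fun j => sCol M j ∧ ¬ mergB M j)) = ∅ :=
    Finset.card_eq_zero.mp hre
  set js := (univ.filter (fun j => sCol M j)).max' hsne with hjs
  have hjmem : js ∈ univ.filter (fun j => sCol M j) := Finset.max'_mem _ _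
  have hjmax : ∀ x ∈ univ.filter (fun j => sCol M j), x ≤ js := fun x hx =>
    Finset.le_max' _ x hx
  simp only [mem_filter, mem_univ, true_and] at hjmem
  have hmb : mergB M js := by
    by_contra hmb
    have : js ∈ univ.filter (fun j => sCol M j ∧ ¬ mergB M j) := by
      simp only [mem_filter, mem_univ, true_and]
      exact ⟨hjmem, hmb⟩
    rw [hempty] at this
    exact absurd this (Finset.notMem_empty _)
  obtain ⟨hlt, hs, hcoleq⟩ := hmb
  have hnext : sCol M ⟨(js : ℕ) + 1, hlt⟩ := by
    obtain ⟨e, he, hu⟩ := hs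
    refine ⟨e, ?_, fun i hi => hu i ?_⟩
    · show M e ⟨(js : ℕ) + 1, hlt⟩ = true
      rw [← hcoleq]; exact he
    · show M i js = true
      rw [hcoleq]
      exact hi
  have : (⟨(js : ℕ) + 1, hlt⟩ : Fin n) ≤ js := by
    apply hjmax
    simp only [mem_filter, mem_univ, true_and]
    exact hnext
  have := Fin.le_def.mp this
  simp only [Fin.val_mk] at this
  omega

lemma u_eq_zero {r q s K : ℕ} (hr : 1 ≤ r) (hK : 2 * r ≤ K)
    (hbad : s = 0 ∨ 2 * r ≤ q + s) : u r q s K = 0 := by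
  have : IsEmpty {M : Fin r → Fin K → Bool // IsBaxter r K M ∧ nsC M = q ∧ reC M = s} := by
    constructor
    rintro ⟨M, hB, hq, hs⟩
    have hwb := width_bound hB hr
    have hrp := reC_pos hB hr hK
    rcases hbad with h | h <;> omega
  exact Nat.card_of_isEmpty

lemma desc_id (a d : ℕ) :
    (a + 1).descFactorial d * (a + 1 - d) = a.descFactorial d * (a + 1) := by
  calc (a + 1).descFactorial d * (a + 1 - d)
      = (a + 1 - d) * (a + 1).descFactorial d := mul_comm _ _
    _ = (a + 1).descFactorial (d + 1) := (Nat.descFactorial_succ (a + 1) d).symm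
    _ = (a + 1) * a.descFactorial d := Nat.succ_descFactorial_succ a d
    _ = a.descFactorial d * (a + 1) := mul_comm _ _

/-- Closed form for the refined counts. -/
lemma u_closed {r q s : ℕ} (hr : 1 ≤ r) (hs : 1 ≤ s) (hqs : q + s + 1 ≤ 2 * r) :
    ∀ K, 2 * r ≤ K → u r q s K * (2 * r - q - 1).descFactorial (s - 1)
      = u r q s (2 * r) * (K - q - 1).descFactorial (s - 1) := by
  intro K hK
  induction K, hK using Nat.le_induction with
  | base => rfl
  | succ K hK ih =>
    have key1 : u r q s (K + 1) * (K + 1 - q - s) = u r q s K * (K - q) :=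
      (step_eq r q s K).symm
    have key2 : (K + 1 - q - 1).descFactorial (s - 1) * (K + 1 - q - s)
        = (K - q - 1).descFactorial (s - 1) * (K - q) := by
      have hid := desc_id (K - q - 1) (s - 1)
      have ea : K + 1 - q - 1 = K - q - 1 + 1 := by omega
      have eb : K + 1 - q - s = K - q - 1 + 1 - (s - 1) := by omega
      rw [ea, eb, hid]
      congr 1
      omega
    have hc : 0 < K + 1 - q - s := by omega
    apply Nat.eq_of_mul_eq_mul_right hc
    calc u r q s (K + 1) * (2 * r - q - 1).descFactorial (s - 1) * (K + 1 - q - s)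
        = (u r q s (K + 1) * (K + 1 - q - s)) * (2 * r - q - 1).descFactorial (s - 1) := by
          ring
      _ = (u r q s K * (K - q)) * (2 * r - q - 1).descFactorial (s - 1) := by rw [key1]
      _ = (u r q s K * (2 * r - q - 1).descFactorial (s - 1)) * (K - q) := by ring
      _ = (u r q s (2 * r) * (K - q - 1).descFactorial (s - 1)) * (K - q) := by rw [ih]
      _ = u r q s (2 * r) * ((K - q - 1).descFactorial (s - 1) * (K - q)) := by ring
      _ = u r q s (2 * r) * ((K + 1 - q - 1).descFactorial (s - 1) * (K + 1 - q - s)) := by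
          rw [key2]
      _ = u r q s (2 * r) * (K + 1 - q - 1).descFactorial (s - 1) * (K + 1 - q - s) := by
          ring

end
end Bx

namespace Bx
open Finset Polynomial
attribute [local instance] Classical.propDecidable
noncomputable section

lemma baxterCount_eq_sum (r K : ℕ) (hr : 1 ≤ r) :
    baxterCount r K = ∑ τ ∈ Finset.range (2 * r) ×ˢ Finset.range (2 * r), u r τ.1 τ.2 K := by
  classical
  rw [baxterCount, Nat.card_eq_fintype_card, Fintype.card_subtype]
  rw [Finset.card_eq_sum_card_fiberwise
    (f := fun M : Fin r → Fin K → Bool => (nsC M, reC M))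
    (t := Finset.range (2 * r) ×ˢ Finset.range (2 * r)) ?hmap]
  case hmap =>
    intro M hM
    simp only [mem_coe, mem_filter, mem_univ, true_and] at hM
    have := width_bound hM hr
    simp only [mem_coe, Finset.mem_product, Finset.mem_range]
    omega
  apply Finset.sum_congr rfl
  intro τ hτ
  have hu : u r τ.1 τ.2 K = Fintype.card
      {M : Fin r → Fin K → Bool // IsBaxter r K M ∧ nsC M = τ.1 ∧ reC M = τ.2} :=
    Nat.card_eq_fintype_card
  rw [hu, Fintype.card_subtype, Finset.filter_filter]
  congr 1
  apply Finset.filter_congr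
  intro M _
  constructor
  · rintro ⟨hB, heq⟩
    exact ⟨hB, congrArg Prod.fst heq, congrArg Prod.snd heq⟩
  · rintro ⟨hB, h1, h2⟩
    exact ⟨hB, Prod.ext h1 h2⟩

/-- The polynomial attached to type `(q,s)`. -/
def polyOf (r q s : ℕ) : Polynomial ℚ :=
  Polynomial.C ((u r q s (2 * r) : ℚ) / ((2 * r - q - 1).descFactorial (s - 1) : ℚ)) *
    ((descPochhammer ℚ (s - 1)).comp (Polynomial.X - Polynomial.C ((q : ℚ) + 1)))

lemma polyOf_natDegree_le (r q s : ℕ) (hs : 1 ≤ s) (hqs : q + s + 1 ≤ 2 * r) :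
    (polyOf r q s).natDegree ≤ 2 * r - 2 := by
  unfold polyOf
  apply le_trans (Polynomial.natDegree_C_mul_le _ _)
  apply le_trans Polynomial.natDegree_comp_le
  rw [descPochhammer_natDegree, Polynomial.natDegree_X_sub_C, mul_one]
  omega

lemma polyOf_eval {r q s K : ℕ} (hr : 1 ≤ r) (hs : 1 ≤ s) (hqs : q + s + 1 ≤ 2 * r)
    (hK : 2 * r ≤ K) : (polyOf r q s).eval (K : ℚ) = (u r q s K : ℚ) := by
  have hclosed := u_closed hr hs hqs K hK
  have hD0pos : 0 < (2 * r - q - 1).descFactorial (s - 1) := by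
    rcases Nat.eq_zero_or_pos ((2 * r - q - 1).descFactorial (s - 1)) with h | h
    · exact absurd (Nat.descFactorial_eq_zero_iff_lt.mp h) (by omega)
    · exact h
  unfold polyOf
  rw [Polynomial.eval_mul, Polynomial.eval_C, Polynomial.eval_comp, Polynomial.eval_sub,
    Polynomial.eval_X, Polynomial.eval_C]
  have hcast : (K : ℚ) - ((q : ℚ) + 1) = ((K - q - 1 : ℕ) : ℚ) := by
    have h1 : K - q - 1 = K - (q + 1) := by omega
    rw [h1, Nat.cast_sub (by omega)]
    push_cast
    ring
  rw [hcast, descPochhammer_eval_eq_descFactorial]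
  have hQ : (u r q s K : ℚ) * ((2 * r - q - 1).descFactorial (s - 1) : ℚ)
      = (u r q s (2 * r) : ℚ) * ((K - q - 1).descFactorial (s - 1) : ℚ) := by
    exact_mod_cast congrArg (fun x : ℕ => (x : ℚ)) hclosed
  have hD0ne : ((2 * r - q - 1).descFactorial (s - 1) : ℚ) ≠ 0 := by
    exact_mod_cast Nat.pos_iff_ne_zero.mp hD0pos
  field_simp
  linarith [hQ]

end
end Bx

theorem baxterCount_eventually_polynomial (r : ℕ) (hr : 1 ≤ r) :
    ∃ p : Polynomial ℚ, p.natDegree ≤ 2 * r - 2 ∧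
      ∃ N : ℕ, ∀ k : ℕ, N ≤ k → (baxterCount r k : ℚ) = p.eval (k : ℚ) := by
  classical
  set S := Finset.range (2 * r) ×ˢ Finset.range (2 * r) with hS
  set P : ℕ × ℕ → Prop := fun τ => 1 ≤ τ.2 ∧ τ.1 + τ.2 + 1 ≤ 2 * r with hP
  refine ⟨∑ τ ∈ S.filter P, Bx.polyOf r τ.1 τ.2, ?_, 2 * r, ?_⟩
  · apply Polynomial.natDegree_sum_le_of_forall_le
    intro τ hτ
    simp only [Finset.mem_filter, hP] at hτ
    exact Bx.polyOf_natDegree_le r τ.1 τ.2 hτ.2.1 hτ.2.2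
  · intro k hk
    rw [Bx.baxterCount_eq_sum r k hr]
    rw [Polynomial.eval_finset_sum]
    push_cast
    rw [← Finset.sum_filter_add_sum_filter_not S P]
    have hzero : ∑ τ ∈ S.filter (fun τ => ¬ P τ), (Bx.u r τ.1 τ.2 k : ℚ) = 0 := by
      apply Finset.sum_eq_zero
      intro τ hτ
      simp only [Finset.mem_filter, hP] at hτ
      have hbad : τ.2 = 0 ∨ 2 * r ≤ τ.1 + τ.2 := by
        have := hτ.2
        push_neg at this
        by_cases h2 : 1 ≤ τ.2
        · exact Or.inr (by have := this h2; omega)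
        · exact Or.inl (by omega)
      rw [Bx.u_eq_zero hr hk hbad, Nat.cast_zero]
    rw [hzero, add_zero]
    apply Finset.sum_congr rfl
    intro τ hτ
    simp only [Finset.mem_filter, hP] at hτ
    exact (Bx.polyOf_eval hr hτ.2.1 hτ.2.2 hk).symm
end

section
/- For every k ≥ 2, the number of Baxter matrices with 2 rows and k columns equals k² + 3k − 4. -/
/-! In a two-row Baxter matrix the pinwheel conditions say that row 0 never has a 1 at or left
of column `j` and at `j + 1` while row 1 has a 1 at `j` and at or right of `j + 1` (and the same
with the rows exchanged). If some column `c` holds two 1's, this forces all columns left of `c`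
to be equal and all columns right of `c` to be equal, each holding a single 1: these matrices
are given by `c` and the two side types, `4k - 4` of them. Otherwise row 1 is the complement of
row 0, which then contains neither `1010` nor `0101` as a pattern, so it is constant except on
one interval `(s, e]` with `s < e < k`: `k(k - 1)` matrices. In total `k² + 3k - 4`. -/

open Finset

theorem Nat.exists_le_lt_and_not_succ {P : ℕ → Prop} {q r : ℕ} (hqr : q ≤ r) (hq : P q)
    (hr : ¬P r) : ∃ j, q ≤ j ∧ j < r ∧ P j ∧ ¬P (j + 1) := by
  induction r with
  | zero => exact absurd (Nat.le_zero.1 hqr ▸ hq) hr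
  | succ r ih =>
    rcases hqr.eq_or_lt with rfl | hqr
    · exact absurd hq hr
    by_cases hPr : P r
    · exact ⟨r, by omega, by omega, hPr, hr⟩
    · obtain ⟨j, hqj, hjr, hj⟩ := ih (by omega) hPr
      exact ⟨j, hqj, by omega, hj⟩

section TwoRows

variable {k : ℕ}

-- For the matrix with rows `a` and `b`, `NoPinwheel a b` is the clockwise and `NoPinwheel b a`
-- the counter-clockwise pinwheel condition.
def NoPinwheel (a b : Fin k → Bool) : Prop :=
  ∀ x j j' y : Fin k, (j' : ℕ) = j + 1 → x ≤ j → j' ≤ y →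
    a x = true → b j = true → a j' = true → b y = true → False

structure IsBaxterPair (a b : Fin k → Bool) : Prop where
  exists_fst : ∃ j, a j = true
  exists_snd : ∃ j, b j = true
  cover : ∀ j, a j = true ∨ b j = true
  noPinwheel : NoPinwheel a b
  noPinwheel_swap : NoPinwheel b a

theorem IsBaxterPair.swap {a b : Fin k → Bool} (h : IsBaxterPair a b) : IsBaxterPair b a :=
  ⟨h.exists_snd, h.exists_fst, fun j => (h.cover j).symm, h.noPinwheel_swap, h.noPinwheel⟩

theorem noPinwheel_iff (a b : Fin k → Bool) :
    NoPinwheel a b ↔ ∀ j : ℕ, ∀ hj : j + 1 < k,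
      (∀ x : Fin k, (x : ℕ) ≤ j → a x = false) ∨ a ⟨j + 1, hj⟩ = false ∨
      (∀ y : Fin k, j + 1 ≤ (y : ℕ) → b y = false) ∨ b ⟨j, Nat.lt_of_succ_lt hj⟩ = false := by
  constructor
  · intro h j hj
    by_contra! hne
    obtain ⟨⟨x, hxj, hx⟩, hj', ⟨y, hjy, hy⟩, hj⟩ := hne
    exact h x _ _ y rfl hxj hjy (by simpa using hx) (by simpa using hj)
      (by simpa using hj') (by simpa using hy)
  · rintro h x j j' y hj' hxj hjy hax hbj haj' hby
    rcases j' with ⟨_, hj'k⟩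
    simp only at hj'
    subst hj'
    rcases h j (by omega) with h | h | h | h
    · simp_all [h x hxj]
    · simp_all
    · simp_all [h y hjy]
    · simp_all

theorem isBaxter_two_iff (M : Fin 2 → Fin k → Bool) :
    IsBaxter 2 k M ↔ IsBaxterPair (M 0) (M 1) := by
  constructor
  · rintro ⟨hrow, hcol, hcw, hccw⟩
    refine ⟨hrow 0, hrow 1, fun j => ?_, (noPinwheel_iff _ _).2 fun j hj => ?_,
      (noPinwheel_iff _ _).2 fun j hj => ?_⟩
    · obtain ⟨i, hi⟩ := hcol j
      fin_cases i <;> simp_all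
    · simpa [Fin.forall_fin_two] using hcw 0 j (by norm_num) hj
    · have := hccw 0 j (by norm_num) hj
      simp only [Fin.forall_fin_two, Fin.zero_eta] at this
      tauto
  · rintro ⟨h0, h1, hcov, hcw, hccw⟩
    refine ⟨Fin.forall_fin_two.2 ⟨h0, h1⟩, fun j => (hcov j).elim (⟨0, ·⟩) (⟨1, ·⟩),
      fun i j hi hj => ?_, fun i j hi hj => ?_⟩ <;> obtain rfl : i = 0 := by omega
    · simpa [Fin.forall_fin_two] using (noPinwheel_iff _ _).1 hcw j hj
    · have := (noPinwheel_iff _ _).1 hccw j hj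
      simp only [Fin.forall_fin_two, Fin.zero_eta]
      tauto

end TwoRows

section Rows

variable {k : ℕ}

def pivotRow (c : ℕ) (l r : Bool) (j : ℕ) : Bool :=
  if j < c then l else if j = c then true else r

def flipRow (l : Bool) (s e : ℕ) (j : ℕ) : Bool :=
  if s < j ∧ j ≤ e then !l else l

theorem flipRow_not (l : Bool) (s e j : ℕ) : flipRow (!l) s e j = !flipRow l s e j := by
  simp only [flipRow]
  split_ifs <;> rfl

theorem flipRow_eq_flipRow_iff {l : Bool} {s e s' e' j : ℕ} :
    flipRow l s e j = flipRow l s' e' j ↔ (s < j ∧ j ≤ e ↔ s' < j ∧ j ≤ e') := by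
  by_cases h : s < j ∧ j ≤ e <;> by_cases h' : s' < j ∧ j ≤ e' <;> simp [flipRow, h, h']

theorem exists_eq_flipRow {f : Fin k → Bool}
    (hf : ∀ p q r s : Fin k, p < q → q < r → r < s → f p ≠ f q → f q ≠ f r → f r ≠ f s → False)
    {i i' : Fin k} (hii' : f i ≠ f i') :
    ∃ l s e, s < e ∧ e < k ∧ ∀ j, f j = flipRow l s e j := by
  set z : Fin k := ⟨0, i.pos⟩
  set S := univ.filter fun j => f j ≠ f z
  have hS : S.Nonempty := by
    by_cases hiz : f i = f z
    · exact ⟨i', by simp [S, ← hiz, Ne.symm hii']⟩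
    · exact ⟨i, by simp [S, hiz]⟩
  set m := S.min' hS
  set M := S.max' hS
  have hm : f m ≠ f z := (mem_filter.1 (S.min'_mem hS)).2
  have hM : f M ≠ f z := (mem_filter.1 (S.max'_mem hS)).2
  have hmM : m ≤ M := S.min'_le _ (S.max'_mem hS)
  have hm0 : (m : ℕ) ≠ 0 := fun h => hm (congrArg f (Fin.ext h))
  -- Every `j` between the first and last entries `m`, `M` differing from `f 0` differs too,
  -- or else `f 0, f m, f j, f M` alternate.
  refine ⟨f z, m - 1, M, by omega, M.isLt, fun j => ?_⟩
  by_cases hj : m ≤ j ∧ j ≤ M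
  · have hjz : f j ≠ f z := by
      intro hjz
      have hmj : m < j := lt_of_le_of_ne hj.1 fun h => hm (h ▸ hjz)
      have hjM : j < M := lt_of_le_of_ne hj.2 fun h => hM (h ▸ hjz)
      exact hf z m j M (Fin.lt_def.2 (by dsimp [z]; omega)) hmj hjM hm.symm (hjz ▸ hm)
        (hjz ▸ hM.symm)
    have hj' : m - 1 < (j : ℕ) ∧ (j : ℕ) ≤ M := by rw [Fin.le_def, Fin.le_def] at hj; omega
    rw [flipRow, if_pos hj', Bool.eq_not_iff]
    exact hjz
  · have hjz : f j = f z := by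
      by_contra hjz
      have hjS : j ∈ S := by simp [S, hjz]
      exact hj ⟨S.min'_le j hjS, S.le_max' j hjS⟩
    have hj' : ¬(m - 1 < (j : ℕ) ∧ (j : ℕ) ≤ M) := by rw [Fin.le_def, Fin.le_def] at hj; omega
    rw [flipRow, if_neg hj', hjz]

theorem noPinwheel_pivotRow (c : ℕ) (l r : Bool) :
    NoPinwheel (k := k) (fun j => pivotRow c l r j) (fun j => pivotRow c (!l) (!r) j) := by
  intro x j j' y hj' hxj hjy hax hbj haj' hby
  rw [Fin.le_def] at hxj hjy
  simp only [pivotRow] at *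
  split_ifs at * <;> simp_all <;> omega

theorem isBaxterPair_pivotRow {c : ℕ} (hc : c < k) (l r : Bool) :
    IsBaxterPair (k := k) (fun j => pivotRow c l r j) (fun j => pivotRow c (!l) (!r) j) where
  exists_fst := ⟨⟨c, hc⟩, by simp [pivotRow]⟩
  exists_snd := ⟨⟨c, hc⟩, by simp [pivotRow]⟩
  cover j := by simp only [pivotRow]; split_ifs <;> simp
  noPinwheel := noPinwheel_pivotRow c l r
  noPinwheel_swap := by simpa using noPinwheel_pivotRow c (!l) (!r)

theorem noPinwheel_flipRow (l : Bool) (s e : ℕ) :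
    NoPinwheel (k := k) (fun j => flipRow l s e j) (fun j => flipRow (!l) s e j) := by
  intro x j j' y hj' hxj hjy hax hbj haj' hby
  rw [Fin.le_def] at hxj hjy
  simp only [flipRow] at *
  split_ifs at * <;> simp_all <;> omega

theorem isBaxterPair_flipRow {s e : ℕ} (hse : s < e) (he : e < k) (l : Bool) :
    IsBaxterPair (k := k) (fun j => flipRow l s e j) (fun j => flipRow (!l) s e j) where
  exists_fst := by
    cases l
    exacts [⟨⟨e, he⟩, by simp [flipRow, hse]⟩, ⟨⟨0, by omega⟩, by simp [flipRow]⟩]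
  exists_snd := by
    cases l
    exacts [⟨⟨0, by omega⟩, by simp [flipRow]⟩, ⟨⟨e, he⟩, by simp [flipRow, hse]⟩]
  cover j := by simp only [flipRow]; split_ifs <;> simp
  noPinwheel := noPinwheel_flipRow l s e
  noPinwheel_swap := by simpa using noPinwheel_flipRow (!l) s e

end Rows

namespace IsBaxterPair

variable {k : ℕ} {a b : Fin k → Bool}

theorem exists_const_on (h : IsBaxterPair a b) {S : Fin k → Prop}
    (hS : ∀ x y, S x → S y → a x = true → b y = true → False) :
    ∃ t, ((∀ x, S x → b x = false) → t = true) ∧ ∀ x, S x → a x = t ∧ b x = !t := by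
  by_cases hB : ∃ y, S y ∧ b y = true
  · obtain ⟨y, hy, hby⟩ := hB
    refine ⟨false, fun hb => by simp [hb y hy] at hby, fun x hx => ?_⟩
    have hax : a x = false := by simpa using fun hax => hS x y hx hy hax hby
    simpa [hax] using h.cover x
  · push Not at hB
    refine ⟨true, fun _ => rfl, fun x hx => ?_⟩
    have hbx : b x = false := by simpa using hB x hx
    simpa [hbx] using h.cover x

theorem false_of_both_of_gt (h : IsBaxterPair a b) {c x y : Fin k} (hac : a c = true)
    (hbc : b c = true) (hx : c < x) (hy : c < y) (hax : a x = true) (hby : b y = true) :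
    False := by
  have hc : (c : ℕ) + 1 < k := by omega
  rcases h.cover ⟨c + 1, hc⟩ with hc' | hc'
  · exact h.noPinwheel c c _ y rfl le_rfl hy hac hbc hc' hby
  · exact h.noPinwheel_swap c c _ x rfl le_rfl hx hbc hac hc' hax

theorem false_of_both_of_lt (h : IsBaxterPair a b) {c x y : Fin k} (hac : a c = true)
    (hbc : b c = true) (hx : x < c) (hy : y < c) (hax : a x = true) (hby : b y = true) :
    False := by
  have hc : (c : ℕ) - 1 < k := by omega
  have hj : (c : ℕ) = (c : ℕ) - 1 + 1 := by omega
  rcases h.cover ⟨c - 1, hc⟩ with hc' | hc'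
  · exact h.noPinwheel_swap y _ c c hj (Fin.le_def.2 (by dsimp only; omega)) le_rfl hby hc' hbc hac
  · exact h.noPinwheel x _ c c hj (Fin.le_def.2 (by dsimp only; omega)) le_rfl hax hc' hac hbc

theorem exists_pivotRow (h : IsBaxterPair a b) {c : Fin k} (hac : a c = true)
    (hbc : b c = true) :
    ∃ l r : Bool, ((c : ℕ) = 0 → l = true) ∧ ((c : ℕ) + 1 = k → r = true) ∧
      ∀ j, a j = pivotRow c l r j ∧ b j = pivotRow c (!l) (!r) j := by
  obtain ⟨l, hl0, hl⟩ := h.exists_const_on (S := (· < c))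
    fun x y hx hy hax hby => h.false_of_both_of_lt hac hbc hx hy hax hby
  obtain ⟨r, hrk, hr⟩ := h.exists_const_on (S := (c < ·))
    fun x y hx hy hax hby => h.false_of_both_of_gt hac hbc hx hy hax hby
  refine ⟨l, r, fun hc => hl0 fun x hx => by omega, fun hc => hrk fun y hy => by omega,
    fun j => ?_⟩
  rcases lt_trichotomy j c with hj | rfl | hj
  · simp [pivotRow, Fin.lt_def.1 hj, hl j hj]
  · simp [pivotRow, hac, hbc]
  · simp [pivotRow, (Fin.lt_def.1 hj).not_gt, (Fin.lt_def.1 hj).ne', hr j hj]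

theorem false_of_alternating (h : IsBaxterPair a b) (hab : ∀ j, ¬(a j = true ∧ b j = true))
    {p q r s : Fin k} (hpq : p < q) (hqr : q < r) (hrs : r < s) (hp : a p = true)
    (hq : b q = true) (hr : a r = true) (hs : b s = true) : False := by
  -- Row `b` switches off at some `j ∈ [q, r)`, so `a` holds the 1 at `j + 1`.
  obtain ⟨_, hqj, hjr, ⟨j, rfl, hbj⟩, hbj'⟩ := Nat.exists_le_lt_and_not_succ
    (P := fun n => ∃ i : Fin k, (i : ℕ) = n ∧ b i = true) hqr.le ⟨q, rfl, hq⟩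
    (fun ⟨i, hi, hbi⟩ => hab r ⟨hr, Fin.ext hi ▸ hbi⟩)
  have hjk : (j : ℕ) + 1 < k := by omega
  have hbj1 : b ⟨j + 1, hjk⟩ = false := by simpa using fun hb => hbj' ⟨_, rfl, hb⟩
  have haj1 : a ⟨j + 1, hjk⟩ = true := (h.cover _).resolve_right (by simp [hbj1])
  exact h.noPinwheel p j _ s rfl (by omega) (Fin.le_def.2 (by dsimp only; omega)) hp hbj haj1 hs

theorem exists_flipRow (h : IsBaxterPair a b) (hab : ∀ j, ¬(a j = true ∧ b j = true)) :
    ∃ l s e, s < e ∧ e < k ∧ ∀ j, a j = flipRow l s e j ∧ b j = flipRow (!l) s e j := by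
  have hba (j : Fin k) : b j = !a j := by
    have hj := h.cover j
    have hj' := hab j
    revert hj hj'
    cases a j <;> cases b j <;> simp
  have hnoAlt (p q r s : Fin k) (hpq : p < q) (hqr : q < r) (hrs : r < s) (hpq' : a p ≠ a q)
      (hqr' : a q ≠ a r) (hrs' : a r ≠ a s) : False := by
    cases hp : a p
    · exact h.swap.false_of_alternating (fun j hj => hab j hj.symm) hpq hqr hrs
        (by simp_all) (by simp_all) (by simp_all) (by simp_all)
    · exact h.false_of_alternating hab hpq hqr hrs hp (by simp_all) (by simp_all) (by simp_all)
  obtain ⟨i, hi⟩ := h.exists_fst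
  obtain ⟨i', hi'⟩ := h.exists_snd
  obtain ⟨l, s, e, hse, he, hf⟩ := exists_eq_flipRow hnoAlt (i := i) (i' := i') (by simp_all)
  exact ⟨l, s, e, hse, he, fun j => ⟨hf j, by rw [hba, hf, flipRow_not]⟩⟩

end IsBaxterPair

section Count

variable {k : ℕ}

def pivotMatrix (k c : ℕ) (l r : Bool) : Fin 2 → Fin k → Bool :=
  ![fun j => pivotRow c l r j, fun j => pivotRow c (!l) (!r) j]

def flipMatrix (k : ℕ) (l : Bool) (s e : ℕ) : Fin 2 → Fin k → Bool :=
  ![fun j => flipRow l s e j, fun j => flipRow (!l) s e j]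

-- `l` does not matter when `c = 0`, nor `r` when `c = k - 1`; fixing them makes the map injective.
def pivotParams (k : ℕ) : Finset (ℕ × Bool × Bool) :=
  (range k ×ˢ univ).filter fun p => (p.1 = 0 → p.2.1 = true) ∧ (p.1 + 1 = k → p.2.2 = true)

-- Triples `(l, ⟨e, s⟩)` with `s < e < k`; the interval `(s, e]` misses column 0, whose type is `l`.
def flipParams (k : ℕ) : Finset (Bool × (_ : ℕ) × ℕ) :=
  univ ×ˢ (range k).sigma range

def twoRowBaxterMatrices (k : ℕ) : Finset (Fin 2 → Fin k → Bool) :=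
  (pivotParams k).image (fun p => pivotMatrix k p.1 p.2.1 p.2.2) ∪
    (flipParams k).image (fun p => flipMatrix k p.1 p.2.2 p.2.1)

theorem isBaxter_two_iff_mem (M : Fin 2 → Fin k → Bool) :
    IsBaxter 2 k M ↔ M ∈ twoRowBaxterMatrices k := by
  rw [isBaxter_two_iff]
  constructor
  · intro h
    by_cases hX : ∃ c, M 0 c = true ∧ M 1 c = true
    · obtain ⟨c, hac, hbc⟩ := hX
      obtain ⟨l, r, hl, hr, hlr⟩ := h.exists_pivotRow hac hbc
      refine mem_union_left _ (mem_image.2 ⟨(c, l, r), by simpa [pivotParams] using ⟨hl, hr⟩, ?_⟩)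
      funext i j
      fin_cases i
      exacts [(hlr j).1.symm, (hlr j).2.symm]
    · obtain ⟨l, s, e, hse, he, hlse⟩ := h.exists_flipRow fun j hj => hX ⟨j, hj⟩
      refine mem_union_right _ (mem_image.2 ⟨(l, ⟨e, s⟩), by simp [flipParams, hse, he], ?_⟩)
      funext i j
      fin_cases i
      exacts [(hlse j).1.symm, (hlse j).2.symm]
  · simp only [twoRowBaxterMatrices, mem_union, mem_image]
    rintro (⟨⟨c, l, r⟩, hp, rfl⟩ | ⟨⟨l, e, s⟩, hp, rfl⟩)
    · simp only [pivotParams, mem_filter, mem_product, mem_range] at hp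
      exact isBaxterPair_pivotRow hp.1.1 l r
    · simp only [flipParams, mem_product, mem_sigma, mem_range] at hp
      exact isBaxterPair_flipRow hp.2.2 hp.2.1 l

theorem pivotMatrix_ne_flipMatrix {c : ℕ} (hc : c < k) (l r l' : Bool) (s e : ℕ) :
    pivotMatrix k c l r ≠ flipMatrix k l' s e := by
  intro h
  have h0 : pivotRow c l r c = flipRow l' s e c := congrFun (congrFun h 0) ⟨c, hc⟩
  have h1 : pivotRow c (!l) (!r) c = flipRow (!l') s e c := congrFun (congrFun h 1) ⟨c, hc⟩
  rw [flipRow_not, ← h0] at h1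
  simp [pivotRow] at h1

theorem injOn_pivotMatrix :
    Set.InjOn (fun p : ℕ × Bool × Bool => pivotMatrix k p.1 p.2.1 p.2.2) (pivotParams k) := by
  rintro ⟨c, l, r⟩ hp ⟨c', l', r'⟩ hp' h
  simp only [mem_coe, pivotParams, mem_filter, mem_product, mem_range, mem_univ, and_true]
    at hp hp'
  have h0 (j : Fin k) : pivotRow c l r j = pivotRow c' l' r' j := congrFun (congrFun h 0) j
  have h1 (j : Fin k) : pivotRow c (!l) (!r) j = pivotRow c' (!l') (!r') j :=
    congrFun (congrFun h 1) j
  obtain rfl : c = c' := by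
    by_contra hcc'
    have h0c := h0 ⟨c, hp.1⟩
    have h1c := h1 ⟨c, hp.1⟩
    simp only [pivotRow] at h0c h1c
    split_ifs at h0c h1c <;> simp_all
  have hl : l = l' := by
    rcases Nat.eq_zero_or_pos c with hc0 | hc0
    · rw [hp.2.1 hc0, hp'.2.1 hc0]
    · simpa [pivotRow, hc0] using h0 ⟨c - 1, by omega⟩
  have hr : r = r' := by
    by_cases hck : c + 1 = k
    · rw [hp.2.2 hck, hp'.2.2 hck]
    · simpa [pivotRow] using h0 ⟨c + 1, by omega⟩
  rw [hl, hr]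

theorem injOn_flipMatrix :
    Set.InjOn (fun p : Bool × (_ : ℕ) × ℕ => flipMatrix k p.1 p.2.2 p.2.1) (flipParams k) := by
  rintro ⟨l, e, s⟩ hp ⟨l', e', s'⟩ hp' h
  simp only [mem_coe, flipParams, mem_product, mem_sigma, mem_range] at hp hp'
  have h0 (j : Fin k) : flipRow l s e j = flipRow l' s' e' j := congrFun (congrFun h 0) j
  obtain rfl : l = l' := by simpa [flipRow] using h0 ⟨0, by omega⟩
  have hse (j : ℕ) (hj : j < k) : s < j ∧ j ≤ e ↔ s' < j ∧ j ≤ e' :=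
    flipRow_eq_flipRow_iff.1 (h0 ⟨j, hj⟩)
  have := hse e (by omega)
  have := hse e' (by omega)
  have := hse (s + 1) (by omega)
  have := hse (s' + 1) (by omega)
  simp only [Prod.mk.injEq, Sigma.mk.injEq, heq_eq_eq, true_and]
  omega

theorem disjoint_pivotMatrix_flipMatrix (k : ℕ) :
    Disjoint ((pivotParams k).image fun p => pivotMatrix k p.1 p.2.1 p.2.2)
      ((flipParams k).image fun p => flipMatrix k p.1 p.2.2 p.2.1) := by
  rw [disjoint_left]
  rintro _ hM hM'
  obtain ⟨⟨c, l, r⟩, hp, rfl⟩ := mem_image.1 hM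
  obtain ⟨⟨l', e, s⟩, -, h⟩ := mem_image.1 hM'
  simp only [pivotParams, mem_filter, mem_product, mem_range] at hp
  exact pivotMatrix_ne_flipMatrix hp.1.1 l r l' s e h.symm

theorem card_pivotParams (m : ℕ) : (pivotParams (m + 2)).card = 4 * (m + 1) := by
  rw [pivotParams, card_filter, sum_product, sum_range_succ, sum_range_succ']
  have hmid : ∀ c ∈ range m, #{p : Bool × Bool | c = m → p.2 = true} = 4 :=
    fun c hc => by simp [(mem_range.1 hc).ne]
  have hedge : #{p : Bool × Bool | p.1 = true} = 2 ∧ #{p : Bool × Bool | p.2 = true} = 2 := by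
    decide
  simp [hedge, sum_congr rfl hmid]
  ring

theorem card_flipParams (k : ℕ) : (flipParams k).card = k * (k - 1) := by
  rw [flipParams, card_product, card_sigma]
  simp only [card_univ, Fintype.card_bool, card_range]
  rw [mul_comm, sum_range_id_mul_two]

theorem card_twoRowBaxterMatrices (m : ℕ) :
    (twoRowBaxterMatrices (m + 2)).card = 4 * (m + 1) + (m + 2) * (m + 1) := by
  rw [twoRowBaxterMatrices, card_union_of_disjoint (disjoint_pivotMatrix_flipMatrix _),
    card_image_of_injOn injOn_pivotMatrix, card_image_of_injOn injOn_flipMatrix,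
    card_pivotParams, card_flipParams]
  rfl

end Count

theorem baxterCount_two_rows (k : ℕ) (hk : 2 ≤ k) :
    (baxterCount 2 k : ℚ) = (k : ℚ)^2 + 3*(k : ℚ) - 4 := by
  obtain ⟨m, rfl⟩ : ∃ m, k = m + 2 := ⟨k - 2, by omega⟩
  have hcount : baxterCount 2 (m + 2) = (twoRowBaxterMatrices (m + 2)).card := by
    rw [baxterCount, ← Nat.card_eq_finsetCard]
    exact Nat.card_congr (Equiv.subtypeEquivRight isBaxter_two_iff_mem)
  rw [hcount, card_twoRowBaxterMatrices]
  push_cast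
  ring
end
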